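/- arXiv:1709.00859 — 11 statements merged into one kernel-verified Lean document; each statement's English description precedes it below -/
import Mathlib

section
/- Let n be a positive integer and let c1, c2 be positive integers in [1,n] such that (n - c1 - c2)/(c1·c2) is a positive integer. Then c2 divides n - c1, and the integer (n - c1)/c2 is invertible modulo n with inverse congruent to (n - c2)/c1 modulo n. -/
/-- If `n, c1, c2` are positive integers with `c1, c2 ≤ n`,
`c1 + c2 < n` and `c1·c2 ∣ n - c1 - c2` (so `(n-c1-c2)/(c1·c2)` is a positive
integer), then `c2 ∣ n - c1`, `c1 ∣ n - c2`, and `(n-c1)/c2` is invertible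
modulo `n` with inverse `(n-c2)/c1`. -/
theorem stmt_0 (n c1 c2 : ℕ) (hc1 : 1 ≤ c1) (hc2 : 1 ≤ c2)
    (hc1n : c1 ≤ n) (hc2n : c2 ≤ n) (hpos : c1 + c2 < n)
    (hdvd : c1 * c2 ∣ n - c1 - c2) :
    c2 ∣ n - c1 ∧ c1 ∣ n - c2 ∧
      ((n - c1) / c2) * ((n - c2) / c1) ≡ 1 [MOD n] := by
  obtain ⟨k, hk⟩ := hdvd
  have hn : n = c1 + c2 + c1 * c2 * k := by
    have h1 : n - c1 - c2 = n - (c1 + c2) := by omega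
    rw [h1] at hk
    omega
  have h1 : n - c1 = c2 * (1 + c1 * k) := by
    rw [hn]; ring_nf; omega
  have h2 : n - c2 = c1 * (1 + c2 * k) := by
    rw [hn]; ring_nf; omega
  refine ⟨⟨_, h1⟩, ⟨_, h2⟩, ?_⟩
  rw [h1, h2, Nat.mul_div_cancel_left _ (by omega), Nat.mul_div_cancel_left _ (by omega)]
  have : (1 + c1 * k) * (1 + c2 * k) = 1 + n * k := by rw [hn]; ring
  rw [this]
  simpa [Nat.ModEq] using Nat.add_mul_mod_self_left 1 n k
end

section
/- Let G be a finite cyclic group of order n with generator e, and let a ∈ [1,n] with gcd(a,n)=1. Suppose there exist positive integers c1, c2 with a = (n - c1)/c2 and such that d = (n - c1 - c2)/(c1·c2) is a positive integer. Then the minimum of the set of distances Δ(B({e, ae})) of the monoid of zero-sum sequences over {e, ae} equals d. -/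
open Multiset

section Defs

variable {G : Type*} [AddCommGroup G]

/-- `S` is a zero-sum sequence over `G0`. -/
def IsZeroSumSeq (G0 : Set G) (S : Multiset G) : Prop :=
  (∀ g ∈ S, g ∈ G0) ∧ S.sum = 0

/-- `S` is a minimal zero-sum sequence over `G0`. -/
def IsMinZeroSum (G0 : Set G) (S : Multiset G) : Prop :=
  S ≠ 0 ∧ IsZeroSumSeq G0 S ∧
    ∀ T : Multiset G, T ≤ S → T ≠ 0 → T ≠ S → T.sum ≠ 0

/-- The set of lengths of factorizations of `B` into minimal zero-sum sequences over `G0`. -/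
def LengthSet (G0 : Set G) (B : Multiset G) : Set ℕ :=
  { k | ∃ F : Multiset (Multiset G), F.card = k ∧ (∀ A ∈ F, IsMinZeroSum G0 A) ∧ F.sum = B }

/-- The set of successive distances of a set of naturals. -/
def DeltaOf (L : Set ℕ) : Set ℕ :=
  { d | ∃ a ∈ L, ∃ b ∈ L, a < b ∧ b - a = d ∧ ∀ c ∈ L, ¬(a < c ∧ c < b) }

/-- The set of distances of the monoid of zero-sum sequences over `G0`. -/
def DeltaB (G0 : Set G) : Set ℕ :=
  ⋃ B ∈ { B : Multiset G | IsZeroSumSeq G0 B }, DeltaOf (LengthSet G0 B)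

/-- Minimal distance, with the convention `min ∅ = 0`. -/
noncomputable def minDelta (G0 : Set G) : ℕ := sInf (DeltaB G0)

/-- Cross number of a sequence. -/
noncomputable def crossNum (S : Multiset G) : ℚ :=
  (S.map fun g => (1 : ℚ) / (addOrderOf g : ℚ)).sum

/-- `G0` is weakly half-factorial. -/
def WeaklyHF (G0 : Set G) : Prop :=
  ∀ A : Multiset G, IsMinZeroSum G0 A → ∃ m : ℕ, crossNum A = (m : ℚ)

/-- `G0` is half-factorial. -/
def HalfFactorial (G0 : Set G) : Prop :=
  ∀ B : Multiset G, IsZeroSumSeq G0 B →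
    ∀ k ∈ LengthSet G0 B, ∀ l ∈ LengthSet G0 B, k = l

end Defs

/-!
Write `n = d c₁ c₂ + c₁ + c₂` and `a = d c₁ + 1`. A sequence `e ^ x (a • e) ^ y` is zero-sum iff
`n ∣ x + a y`, and every minimal one has `x + a y ≡ n [MOD d n]`: either `x + a y = n`, or
`x < c₁`, in which case `y` is forced (as `a` is a unit mod `n`) to be
`(d (c₁ - x) + 1) c₂ + (c₁ - x)`, so that `x + a y = (d (c₁ - x) + 1) n`. Summing over a
factorization of length `k` gives `k n ≡ x + a y [MOD d n]`, so all lengths of a sequence are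
congruent mod `d` and every distance is at least `d`. The distance `d` occurs because
`U ^ (d + 2) = V W` with the minimal sequences `U = e ^ c₁ (a • e) ^ c₂`,
`V = e ^ (c₁ - 1) (a • e) ^ ((d + 1) c₂ + 1)` and `W = e ^ (c₁ + a) (a • e) ^ (c₂ - 1)`.
-/

def IsAtomPair (n a x y : ℕ) : Prop :=
  0 < x + y ∧ n ∣ x + a * y ∧
    ∀ x' ≤ x, ∀ y' ≤ y, 0 < x' + y' → n ∣ x' + a * y' → x' = x ∧ y' = y

section Arithmetic

variable {n a d c1 c2 x y : ℕ}

lemma isAtomPair_of_add_mul_eq (ha : 0 < a) (hn : 0 < n) (h : x + a * y = n) :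
    IsAtomPair n a x y := by
  refine ⟨?_, h ▸ dvd_rfl, fun x' hx' y' hy' hpos hdvd => ?_⟩
  · by_contra! h0
    obtain ⟨rfl, rfl⟩ : x = 0 ∧ y = 0 := by omega
    omega
  have hay : a * y' ≤ a * y := Nat.mul_le_mul_left a hy'
  have : y' ≤ a * y' := Nat.le_mul_of_pos_left y' ha
  have : n ≤ x' + a * y' := Nat.le_of_dvd (by omega) hdvd
  exact ⟨by omega, Nat.eq_of_mul_eq_mul_left ha (by omega)⟩

lemma eq_of_dvd_add_mul_of_coprime {y' : ℕ} (hco : Nat.Coprime a n) (hy : 1 ≤ y) (hyn : y ≤ n)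
    (hy' : 1 ≤ y') (hyn' : y' ≤ n) (h : n ∣ x + a * y) (h' : n ∣ x + a * y') : y = y' := by
  have hmod : a * y ≡ a * y' [MOD n] := Nat.ModEq.add_left_cancel' x <|
    (Nat.modEq_zero_iff_dvd.2 h).trans (Nat.modEq_zero_iff_dvd.2 h').symm
  obtain ⟨u, rfl⟩ : ∃ u, y = u + 1 := ⟨y - 1, by omega⟩
  obtain ⟨u', rfl⟩ : ∃ u', y' = u' + 1 := ⟨y' - 1, by omega⟩
  have := ((hmod.cancel_left_of_coprime hco.symm).add_right_cancel' 1).eq_of_lt_of_lt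
    (by omega) (by omega)
  omega

lemma coprime_mul_add_one (d c1 c2 : ℕ) :
    Nat.Coprime (d * c1 + 1) (d * c1 * c2 + c1 + c2) := by
  rw [show d * c1 * c2 + c1 + c2 = c1 + (d * c1 + 1) * c2 by ring,
    Nat.coprime_add_mul_left_right, Nat.coprime_mul_right_add_left]
  exact Nat.coprime_one_left c1

lemma add_mul_eq_of_add_eq {s : ℕ} (hn : n = d * c1 * c2 + c1 + c2) (ha : a = d * c1 + 1)
    (h : x + s = c1) : x + a * ((d * s + 1) * c2 + s) = (d * s + 1) * n := by
  subst hn ha h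
  ring

lemma eq_of_lt_of_dvd (hn : n = d * c1 * c2 + c1 + c2) (ha : a = d * c1 + 1) (hx : x < c1)
    (hy : 1 ≤ y) (hyn : y ≤ n) (h : n ∣ x + a * y) :
    y = (d * (c1 - x) + 1) * c2 + (c1 - x) := by
  have hw := add_mul_eq_of_add_eq (x := x) (s := c1 - x) hn ha (by omega)
  have : d * (c1 - x) * c2 ≤ d * c1 * c2 := by gcongr; omega
  refine eq_of_dvd_add_mul_of_coprime (hn ▸ ha ▸ coprime_mul_add_one d c1 c2) hy hyn
    (by omega) ?_ h ⟨_, hw.trans (mul_comm _ _)⟩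
  rw [hn, add_mul, one_mul]
  omega

lemma IsAtomPair.exists_add_mul_eq (hn : n = d * c1 * c2 + c1 + c2) (ha : a = d * c1 + 1)
    (h : IsAtomPair n a x y) : ∃ j, x + a * y = (d * j + 1) * n := by
  obtain ⟨hpos, hdvd, hmin⟩ := h
  have hay : y ≤ a * y := Nat.le_mul_of_pos_left y (by omega)
  have hn0 : 0 < n := Nat.pos_of_ne_zero fun h0 => by
    rw [h0, zero_dvd_iff] at hdvd
    omega
  have hnc : c1 + a * c2 = n := by subst hn ha; ring
  rcases Nat.eq_zero_or_pos y with rfl | hy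
  · have := Nat.le_of_dvd (by omega) hdvd
    obtain ⟨rfl, -⟩ := hmin n (by omega) 0 le_rfl hn0 (by simp)
    exact ⟨0, by simp⟩
  have hyn : y ≤ n := by
    by_contra! hny
    have := hmin 0 (Nat.zero_le x) n hny.le (by omega) (by simp)
    omega
  have hxn : x < n := by
    by_contra! hnx
    have := hmin n hnx 0 (Nat.zero_le y) (by omega) (by simp)
    omega
  by_cases hx : x < c1
  · exact ⟨c1 - x, by
      rw [eq_of_lt_of_dvd hn ha hx hy hyn hdvd, add_mul_eq_of_add_eq hn ha (by omega)]⟩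
  by_cases hcy : c2 ≤ y
  · obtain ⟨rfl, rfl⟩ := hmin c1 (by omega) c2 hcy (by
      by_contra! h0
      obtain ⟨rfl, rfl⟩ : c1 = 0 ∧ c2 = 0 := by omega
      omega) ⟨1, by omega⟩
    exact ⟨0, by omega⟩
  obtain ⟨m, hm⟩ := hdvd
  have : a * (y + 1) ≤ a * c2 := Nat.mul_le_mul_left a (by omega)
  have hm1 : m = 1 := by
    have : n * m < n * 2 := by rw [mul_add_one] at this; omega
    have := Nat.lt_of_mul_lt_mul_left this
    have : m ≠ 0 := by rintro rfl; omega
    omega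
  exact ⟨0, by rw [hm, hm1]; ring⟩

lemma IsAtomPair.add_mul_modEq (hn : n = d * c1 * c2 + c1 + c2) (ha : a = d * c1 + 1)
    (h : IsAtomPair n a x y) : x + a * y ≡ n [MOD d * n] := by
  obtain ⟨j, hj⟩ := h.exists_add_mul_eq hn ha
  rw [hj, show (d * j + 1) * n = n + d * n * j by ring]
  exact Nat.add_mul_mod_self_left n (d * n) j

lemma isAtomPair_pred_succ (hn : n = d * c1 * c2 + c1 + c2) (ha : a = d * c1 + 1)
    (hc1 : 0 < c1) : IsAtomPair n a (c1 - 1) ((d + 1) * c2 + 1) := by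
  have hw := add_mul_eq_of_add_eq (s := 1) hn ha (show c1 - 1 + 1 = c1 by omega)
  rw [mul_one] at hw
  refine ⟨by omega, ⟨d + 1, hw.trans (mul_comm _ _)⟩, fun x' hx' y' hy' hpos hdvd => ?_⟩
  have hcn : c1 ≤ n := by omega
  have hy'0 : 1 ≤ y' := by
    by_contra! h0
    rw [Nat.lt_one_iff.1 h0, mul_zero, add_zero] at hdvd
    have := Nat.le_of_dvd (by omega) hdvd
    omega
  have : d * c2 ≤ d * c1 * c2 := by
    rw [mul_right_comm]
    exact Nat.le_mul_of_pos_right _ hc1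
  have hy'n : y' ≤ n := by
    rw [add_mul, one_mul] at hy'
    omega
  have hy'eq := eq_of_lt_of_dvd hn ha (by omega) hy'0 hy'n hdvd
  have hs : c1 - x' = 1 := by
    by_contra! hs
    have : (d + 1) * c2 ≤ (d * (c1 - x') + 1) * c2 := by
      gcongr
      exact Nat.le_mul_of_pos_right d (by omega)
    omega
  rw [hs, mul_one] at hy'eq
  omega

end Arithmetic

section Multiset

variable {α : Type*} [DecidableEq α] {e g : α} {x y x' y' : ℕ}

lemma eq_replicate_add_replicate (hne : e ≠ g) {S : Multiset α} (hS : ∀ z ∈ S, z = e ∨ z = g) :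
    S = replicate (S.count e) e + replicate (S.count g) g := by
  ext z
  rw [count_add, count_replicate, count_replicate]
  by_cases hze : e = z
  · subst hze
    simp [hne.symm]
  by_cases hzg : g = z
  · subst hzg
    simp [hne]
  rw [count_eq_zero.2 fun hz => (hS z hz).elim (hze ∘ Eq.symm) (hzg ∘ Eq.symm), if_neg hze,
    if_neg hzg]

lemma replicate_add_replicate_inj (hne : e ≠ g) :
    replicate x e + replicate y g = replicate x' e + replicate y' g ↔ x = x' ∧ y = y' := by
  refine ⟨fun h => ⟨?_, ?_⟩, by rintro ⟨rfl, rfl⟩; rfl⟩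
  · simpa [count_replicate, hne.symm] using congrArg (count e) h
  · simpa [count_replicate, hne] using congrArg (count g) h

lemma le_replicate_add_replicate_iff (hne : e ≠ g) {T : Multiset α} :
    T ≤ replicate x e + replicate y g ↔
      ∃ x' ≤ x, ∃ y' ≤ y, T = replicate x' e + replicate y' g := by
  constructor
  · intro hT
    have hmem : ∀ z ∈ T, z = e ∨ z = g := fun z hz =>
      (mem_add.1 (mem_of_le hT hz)).imp eq_of_mem_replicate eq_of_mem_replicate
    have hx := count_le_of_le e hT
    have hy := count_le_of_le g hT
    simp only [count_add, count_replicate, if_true, if_neg hne.symm, if_neg hne] at hx hy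
    exact ⟨_, by omega, _, by omega, eq_replicate_add_replicate hne hmem⟩
  · rintro ⟨x', hx', y', hy', rfl⟩
    exact add_le_add ((replicate_le_replicate e).2 hx') ((replicate_le_replicate g).2 hy')

end Multiset

section ZeroSumSequences

variable {G : Type*} [AddCommGroup G]

lemma IsZeroSumSeq.of_mem_lengthSet {G0 : Set G} {B : Multiset G} {k : ℕ}
    (hk : k ∈ LengthSet G0 B) : IsZeroSumSeq G0 B := by
  obtain ⟨F, -, hF, rfl⟩ := hk
  induction F using Multiset.induction with
  | empty => exact ⟨by simp, by simp⟩
  | cons A F ih =>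
    obtain ⟨hmem, hsum⟩ := ih fun B hB => hF B (mem_cons_of_mem hB)
    obtain ⟨-, ⟨hAmem, hAsum⟩, -⟩ := hF A (mem_cons_self A F)
    rw [sum_cons]
    exact ⟨fun z hz => (mem_add.1 hz).elim (hAmem z) (hmem z),
      by rw [sum_add, hAsum, hsum, add_zero]⟩

lemma dvd_of_mem_deltaOf {L : Set ℕ} {d t : ℕ} (hL : ∀ k ∈ L, ∀ k' ∈ L, k ≡ k' [MOD d])
    (ht : t ∈ DeltaOf L) : d ∣ t := by
  obtain ⟨k, hk, k', hk', hlt, rfl, -⟩ := ht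
  exact (Nat.modEq_iff_dvd' hlt.le).1 (hL k hk k' hk')

lemma pos_of_mem_deltaOf {L : Set ℕ} {t : ℕ} (ht : t ∈ DeltaOf L) : 0 < t := by
  obtain ⟨k, -, k', -, hlt, rfl, -⟩ := ht
  omega

lemma mem_deltaOf_of_modEq {L : Set ℕ} {d k : ℕ} (hd : 0 < d)
    (hL : ∀ k ∈ L, ∀ k' ∈ L, k ≡ k' [MOD d]) (hk : k ∈ L) (hkd : k + d ∈ L) : d ∈ DeltaOf L := by
  refine ⟨k, hk, k + d, hkd, by omega, by omega, fun c hc ⟨hkc, hcd⟩ => ?_⟩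
  have := Nat.le_of_dvd (by omega) ((Nat.modEq_iff_dvd' hkc.le).1 (hL k hk c hc))
  omega

lemma minDelta_eq_of_modEq {G0 : Set G} {d : ℕ} (hd : 0 < d)
    (hL : ∀ B, IsZeroSumSeq G0 B → ∀ k ∈ LengthSet G0 B, ∀ k' ∈ LengthSet G0 B, k ≡ k' [MOD d])
    {B : Multiset G} {k : ℕ} (hk : k ∈ LengthSet G0 B) (hkd : k + d ∈ LengthSet G0 B) :
    minDelta G0 = d := by
  have hB := IsZeroSumSeq.of_mem_lengthSet hk
  have hmem : d ∈ DeltaB G0 := Set.mem_biUnion hB (mem_deltaOf_of_modEq hd (hL B hB) hk hkd)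
  refine le_antisymm (Nat.sInf_le hmem) (le_csInf ⟨d, hmem⟩ fun t ht => ?_)
  obtain ⟨B', hB', ht⟩ := Set.mem_iUnion₂.1 ht
  exact Nat.le_of_dvd (pos_of_mem_deltaOf ht) (dvd_of_mem_deltaOf (hL B' hB') ht)

variable {e : G} {a : ℕ}

lemma ne_nsmul_of_one_lt_of_lt_addOrderOf (h1 : 1 < a) (h : a < addOrderOf e) : e ≠ a • e :=
  fun hea => by
    have := nsmul_injOn_Iio_addOrderOf (show 1 ∈ Set.Iio (addOrderOf e) by simp; omega)
      (Set.mem_Iio.2 h) (by simpa using hea)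
    omega

lemma sum_replicate_add_replicate_nsmul (x y : ℕ) :
    (replicate x e + replicate y (a • e)).sum = (x + a * y) • e := by
  rw [sum_add, sum_replicate, sum_replicate, smul_smul, add_nsmul, mul_comm]

variable [DecidableEq G]

lemma isMinZeroSum_replicate_add_replicate_iff (hne : e ≠ a • e) (x y : ℕ) :
    IsMinZeroSum ({e, a • e} : Set G) (replicate x e + replicate y (a • e)) ↔
      IsAtomPair (addOrderOf e) a x y := by
  have hsum : ∀ x y, (replicate x e + replicate y (a • e)).sum = 0 ↔ addOrderOf e ∣ x + a * y :=
    fun x y => by rw [sum_replicate_add_replicate_nsmul, addOrderOf_dvd_iff_nsmul_eq_zero]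
  have hne0 : ∀ x y, replicate x e + replicate y (a • e) ≠ 0 ↔ 0 < x + y := fun x y => by
    rw [← card_pos, card_add, card_replicate, card_replicate]
  have hmem : ∀ z ∈ replicate x e + replicate y (a • e), z ∈ ({e, a • e} : Set G) := fun z hz =>
    (mem_add.1 hz).imp eq_of_mem_replicate eq_of_mem_replicate
  simp only [IsMinZeroSum, IsZeroSumSeq, IsAtomPair, hne0, hsum, and_assoc]
  refine and_congr_right fun _ => ?_
  rw [and_iff_right hmem]
  refine and_congr_right fun _ => ⟨fun h x' hx' y' hy' hpos hdvd => ?_, ?_⟩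
  · by_contra hxy
    exact h _ ((le_replicate_add_replicate_iff hne).2 ⟨x', hx', y', hy', rfl⟩) ((hne0 x' y').2 hpos)
      (fun h' => hxy ((replicate_add_replicate_inj hne).1 h')) ((hsum x' y').2 hdvd)
  · rintro h T hT hT0 hTS hTsum
    obtain ⟨x', hx', y', hy', rfl⟩ := (le_replicate_add_replicate_iff hne).1 hT
    obtain ⟨rfl, rfl⟩ := h x' hx' y' hy' ((hne0 x' y').1 hT0) ((hsum x' y').1 hTsum)
    exact hTS rfl

lemma IsMinZeroSum.isAtomPair (hne : e ≠ a • e) {A : Multiset G}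
    (hA : IsMinZeroSum ({e, a • e} : Set G) A) :
    IsAtomPair (addOrderOf e) a (A.count e) (A.count (a • e)) := by
  rwa [← isMinZeroSum_replicate_add_replicate_iff hne,
    ← eq_replicate_add_replicate hne hA.2.1.1]

lemma add_mul_count_sum_modEq (hne : e ≠ a • e) {m q : ℕ}
    (hatom : ∀ x y, IsAtomPair (addOrderOf e) a x y → x + a * y ≡ m [MOD q])
    {F : Multiset (Multiset G)} (hF : ∀ A ∈ F, IsMinZeroSum ({e, a • e} : Set G) A) :
    F.sum.count e + a * F.sum.count (a • e) ≡ card F * m [MOD q] := by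
  induction F using Multiset.induction with
  | empty => simp [Nat.ModEq.refl]
  | cons A F ih =>
    have hA := hatom _ _ ((hF A (mem_cons_self A F)).isAtomPair hne)
    have hrest := ih fun B hB => hF B (mem_cons_of_mem hB)
    rw [sum_cons, count_add, count_add, card_cons, add_one_mul,
      show ∀ u v u' v' : ℕ, u + v + a * (u' + v') = (v + a * v') + (u + a * u') by
        intros; ring]
    exact hrest.add hA

lemma modEq_of_mem_lengthSet (hne : e ≠ a • e) (hn0 : addOrderOf e ≠ 0) {d : ℕ}
    (hatom : ∀ x y, IsAtomPair (addOrderOf e) a x y →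
      x + a * y ≡ addOrderOf e [MOD d * addOrderOf e])
    {B : Multiset G} {k k' : ℕ} (hk : k ∈ LengthSet ({e, a • e} : Set G) B)
    (hk' : k' ∈ LengthSet ({e, a • e} : Set G) B) : k ≡ k' [MOD d] := by
  obtain ⟨F, rfl, hF, rfl⟩ := hk
  obtain ⟨F', rfl, hF', hFF'⟩ := hk'
  have h' := add_mul_count_sum_modEq hne hatom hF'
  rw [hFF'] at h'
  exact Nat.ModEq.mul_right_cancel' hn0 ((add_mul_count_sum_modEq hne hatom hF).symm.trans h')

variable {n d c1 c2 : ℕ}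

lemma exists_two_mem_lengthSet_and_two_add_mem (he : addOrderOf e = n) (hne : e ≠ a • e)
    (hn : n = d * c1 * c2 + c1 + c2) (ha : a = d * c1 + 1) (hc1 : 0 < c1) (hc2 : 0 < c2) :
    ∃ B, 2 ∈ LengthSet ({e, a • e} : Set G) B ∧ 2 + d ∈ LengthSet ({e, a • e} : Set G) B := by
  have hatom : ∀ {x y}, IsAtomPair n a x y →
      IsMinZeroSum ({e, a • e} : Set G) (replicate x e + replicate y (a • e)) := fun h =>
    (isMinZeroSum_replicate_add_replicate_iff hne _ _).2 (he ▸ h)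
  have hn0 : 0 < n := by omega
  set U := replicate c1 e + replicate c2 (a • e)
  set V := replicate (c1 - 1) e + replicate ((d + 1) * c2 + 1) (a • e)
  set W := replicate (c1 + a) e + replicate (c2 - 1) (a • e)
  have hU : IsMinZeroSum ({e, a • e} : Set G) U :=
    hatom (isAtomPair_of_add_mul_eq (by omega) hn0 (by subst hn ha; ring))
  have hV : IsMinZeroSum ({e, a • e} : Set G) V := hatom (isAtomPair_pred_succ hn ha hc1)
  have hW : IsMinZeroSum ({e, a • e} : Set G) W := hatom <| isAtomPair_of_add_mul_eq (by omega) hn0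
    (by rw [add_assoc, add_comm a, ← mul_add_one, Nat.sub_one_add_one hc2.ne']; subst hn ha; ring)
  have hUVW : (replicate (d + 2) U).sum = ({V, W} : Multiset (Multiset G)).sum := by
    rw [sum_replicate, smul_add, nsmul_replicate, nsmul_replicate, insert_eq_cons, sum_cons,
      sum_singleton, add_add_add_comm, ← replicate_add, ← replicate_add]
    congr 2
    · have : (d + 2) * c1 = d * c1 + 2 * c1 := by ring
      omega
    · have : (d + 2) * c2 = (d + 1) * c2 + c2 := by ring
      omega
  exact ⟨_, ⟨{V, W}, rfl, by simp [hV, hW], hUVW.symm⟩,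
    ⟨replicate (d + 2) U, by rw [card_replicate, add_comm],
      fun A hA => eq_of_mem_replicate hA ▸ hU, rfl⟩⟩

end ZeroSumSequences

theorem stmt_1_general {G : Type*} [AddCommGroup G] (n : ℕ)
    (e : G) (he : addOrderOf e = n)
    (a : ℕ) (c1 c2 d : ℕ) (hc1 : 0 < c1) (hc2 : 0 < c2) (hd : 0 < d)
    (hac : a * c2 = n - c1)
    (hdd : d * (c1 * c2) = n - c1 - c2) :
    minDelta ({e, a • e} : Set G) = d := by
  classical
  have hn : n = d * c1 * c2 + c1 + c2 := by
    have : 0 < d * (c1 * c2) := by positivity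
    rw [mul_assoc]
    omega
  have ha : a = d * c1 + 1 :=
    Nat.eq_of_mul_eq_mul_right hc2 (by rw [hac, hn, add_one_mul]; omega)
  have hne : e ≠ a • e := by
    have : 0 < d * c1 := Nat.mul_pos hd hc1
    have : d * c1 ≤ d * c1 * c2 := Nat.le_mul_of_pos_right _ hc2
    exact ne_nsmul_of_one_lt_of_lt_addOrderOf (by omega) (by omega)
  obtain ⟨B, h2, h2d⟩ := exists_two_mem_lengthSet_and_two_add_mem he hne hn ha hc1 hc2
  exact minDelta_eq_of_modEq hd (fun _ _ _ hk _ hk' => modEq_of_mem_lengthSet hne (by omega)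
    (he ▸ fun _ _ => IsAtomPair.add_mul_modEq hn ha) hk hk') h2 h2d

/-- In a cyclic group of order `n` with generator `e`, for
`a ∈ [1,n]` coprime to `n` with `a = (n-c1)/c2` and `d = (n-c1-c2)/(c1·c2)`
a positive integer, the minimum of the set of distances of the monoid of
zero-sum sequences over `{e, a•e}` equals `d`. -/
theorem stmt_1 {G : Type*} [AddCommGroup G] [Fintype G] (n : ℕ)
    (hcard : Fintype.card G = n) (e : G) (he : addOrderOf e = n)
    (a : ℕ) (ha1 : 1 ≤ a) (han : a ≤ n) (hgcd : Nat.gcd a n = 1)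
    (c1 c2 d : ℕ) (hc1 : 0 < c1) (hc2 : 0 < c2) (hd : 0 < d)
    (hac : a * c2 = n - c1) (hcn : c1 + c2 < n)
    (hdd : d * (c1 * c2) = n - c1 - c2) :
    minDelta ({e, a • e} : Set G) = d :=
  stmt_1_general n e he a c1 c2 d hc1 hc2 hd hac hdd
end

section
/- Let G be a finite cyclic group of order n with generator e, and let G0 ⊆ G be a subset containing e. Then min Δ(B(G0)) = gcd over all minimal zero-sum sequences A over G0 of (σ_e(A) - n)/n, where σ_e(A) = Σ_{h ∈ A} s_e(h) and s_e(h) is the unique integer in [1,n] with h = s_e(h)·e. -/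
open Multiset

/-!
Write `σ(S)` for `(S.map s).sum`. Since `S.sum = σ(S) • e` for `S` over `G0`, a sequence over `G0`
is zero-sum iff `n ∣ σ(S)`, and every sequence with `σ = n` is a minimal zero-sum sequence.

Since `min Δ` divides every distance (the usual argument with `q • B + C`), it divides every
difference of two lengths of one zero-sum sequence. For a minimal zero-sum `A`, the sequence
`A · e^r` with `r = Σ_{h ∈ A} (n - s h)` factors both into the atoms `h · e^(n - s h)`, giving length
`|A|`, and as `A · (e^n)^w`, giving length `1 + w`; the two lengths differ by `σ(A)/n - 1`.

Conversely, `σ(B)/n = |F| + Σ_{A ∈ F} (σ(A)/n - 1)` for every factorization `F` of `B`, so all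
lengths of `B` are congruent modulo any common divisor of the numbers `σ(A)/n - 1`.
-/

theorem exists_mem_deltaOf_sub {L : Set ℕ} {a b : ℕ} (ha : a ∈ L) (hb : b ∈ L) (hab : a < b) :
    ∃ c ∈ L, a < c ∧ c ≤ b ∧ c - a ∈ DeltaOf L := by
  set U := {x | x ∈ L ∧ a < x}
  have hc : sInf U ∈ U := Nat.sInf_mem ⟨b, hb, hab⟩
  refine ⟨sInf U, hc.1, hc.2, Nat.sInf_le ⟨hb, hab⟩, a, ha, sInf U, hc.1, hc.2, rfl, ?_⟩
  rintro x hx ⟨hax, hxc⟩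
  exact (Nat.sInf_le (⟨hx, hax⟩ : x ∈ U)).not_gt hxc

theorem dvd_sub_of_forall_deltaOf_dvd {L : Set ℕ} {d : ℕ} (hd : ∀ g ∈ DeltaOf L, d ∣ g)
    {a b : ℕ} (ha : a ∈ L) (hb : b ∈ L) (hab : a ≤ b) : d ∣ b - a := by
  obtain rfl | hlt := hab.eq_or_lt
  · simp
  obtain ⟨c, hc, hac, hcb, hgap⟩ := exists_mem_deltaOf_sub ha hb hlt
  have hcb' : d ∣ b - c := dvd_sub_of_forall_deltaOf_dvd hd hc hb hcb
  rw [← Nat.sub_add_sub_cancel hcb hac.le]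
  exact dvd_add hcb' (hd _ hgap)
termination_by b - a

theorem Multiset.sum_map_cons_replicate {α : Type*} (a : α) (f : α → ℕ) (A : Multiset α) :
    (A.map fun h => h ::ₘ replicate (f h) a).sum = A + replicate (A.map f).sum a := by
  induction A using Multiset.induction with
  | empty => simp
  | cons h A ih =>
    rw [map_cons, sum_cons, ih, map_cons, sum_cons, replicate_add, cons_add, cons_add,
      add_left_comm]

section LengthSet

variable {G : Type*} [AddCommGroup G] {G0 : Set G}

theorem IsZeroSumSeq.add {B C : Multiset G} (hB : IsZeroSumSeq G0 B) (hC : IsZeroSumSeq G0 C) :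
    IsZeroSumSeq G0 (B + C) :=
  ⟨fun g hg => (mem_add.1 hg).elim (hB.1 g) (hC.1 g), by rw [sum_add, hB.2, hC.2, add_zero]⟩

theorem IsZeroSumSeq.nsmul {B : Multiset G} (hB : IsZeroSumSeq G0 B) (q : ℕ) :
    IsZeroSumSeq G0 (q • B) :=
  ⟨fun _ hg => hB.1 _ (mem_of_mem_nsmul hg), by rw [sum_nsmul, hB.2, smul_zero]⟩

theorem one_mem_lengthSet {A : Multiset G} (hA : IsMinZeroSum G0 A) : 1 ∈ LengthSet G0 A :=
  ⟨{A}, card_singleton A, fun _ hX => mem_singleton.1 hX ▸ hA, sum_singleton A⟩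

theorem add_mem_lengthSet {B C : Multiset G} {k l : ℕ} (hk : k ∈ LengthSet G0 B)
    (hl : l ∈ LengthSet G0 C) : k + l ∈ LengthSet G0 (B + C) := by
  obtain ⟨F, rfl, hF, rfl⟩ := hk
  obtain ⟨F', rfl, hF', rfl⟩ := hl
  exact ⟨F + F', card_add F F', fun A hA => (mem_add.1 hA).elim (hF A) (hF' A), sum_add F F'⟩

theorem nsmul_mem_lengthSet {B : Multiset G} {k : ℕ} (hk : k ∈ LengthSet G0 B) (q : ℕ) :
    q * k ∈ LengthSet G0 (q • B) := by
  obtain ⟨F, rfl, hF, rfl⟩ := hk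
  exact ⟨q • F, card_nsmul F q, fun A hA => hF A (mem_of_mem_nsmul hA), sum_nsmul F q⟩

theorem minDelta_le_sub {B : Multiset G} (hB : IsZeroSumSeq G0 B) {a b : ℕ}
    (ha : a ∈ LengthSet G0 B) (hb : b ∈ LengthSet G0 B) (hab : a < b) : minDelta G0 ≤ b - a := by
  obtain ⟨c, -, hac, hcb, hgap⟩ := exists_mem_deltaOf_sub ha hb hab
  have : minDelta G0 ≤ c - a := Nat.sInf_le (Set.mem_biUnion hB hgap)
  omega

theorem minDelta_dvd_of_mem_deltaB {g : ℕ} (hg : g ∈ DeltaB G0) : minDelta G0 ∣ g := by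
  set d := minDelta G0
  have hdΔ : d ∈ DeltaB G0 := Nat.sInf_mem ⟨g, hg⟩
  obtain ⟨B, hB, a, ha, b, hb, hab, hd, -⟩ := Set.mem_iUnion₂.1 hdΔ
  obtain ⟨C, hC, a', ha', b', hb', hab', rfl, -⟩ := Set.mem_iUnion₂.1 hg
  set q := (b' - a') / d
  -- In `q • B + C` the lengths `q * b + a'` and `q * a + b'` differ by `(b' - a') % d < d`.
  have h₁ := add_mem_lengthSet (nsmul_mem_lengthSet hb q) ha'
  have h₂ := add_mem_lengthSet (nsmul_mem_lengthSet ha q) hb'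
  have hdiv : d * q + (b' - a') % d = b' - a' := Nat.div_add_mod _ _
  have hmod := Nat.mod_lt (b' - a') (show 0 < d by omega)
  have hsub : q * a + b' - (q * b + a') = (b' - a') % d := by
    rw [show b = a + d by omega, Nat.mul_add, Nat.mul_comm q d]
    omega
  refine Nat.dvd_of_mod_eq_zero (Nat.eq_zero_of_not_pos fun hpos => ?_)
  have : d ≤ (b' - a') % d := hsub ▸ minDelta_le_sub ((hB.nsmul q).add hC) h₁ h₂ (by omega)
  omega

theorem minDelta_dvd_sub_of_mem_lengthSet {B : Multiset G} (hB : IsZeroSumSeq G0 B) {a b : ℕ}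
    (ha : a ∈ LengthSet G0 B) (hb : b ∈ LengthSet G0 B) (hab : a ≤ b) : minDelta G0 ∣ b - a :=
  dvd_sub_of_forall_deltaOf_dvd (fun _ hg => minDelta_dvd_of_mem_deltaB (Set.mem_biUnion hB hg))
    ha hb hab

theorem dvd_minDelta_of_forall_modEq {m : ℕ}
    (h : ∀ B, IsZeroSumSeq G0 B → ∀ a ∈ LengthSet G0 B, ∀ b ∈ LengthSet G0 B, a ≡ b [MOD m]) :
    m ∣ minDelta G0 := by
  rcases (DeltaB G0).eq_empty_or_nonempty with hΔ | hΔ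
  · rw [minDelta, hΔ, Nat.sInf_empty]
    exact dvd_zero m
  have hdΔ : minDelta G0 ∈ DeltaB G0 := Nat.sInf_mem hΔ
  obtain ⟨B, hB, a, ha, b, hb, hab, hd, -⟩ := Set.mem_iUnion₂.1 hdΔ
  rw [← hd]
  exact (Nat.modEq_iff_dvd' hab.le).1 (h B hB a ha b hb)

end LengthSet

section Cyclic

variable {G : Type*} [AddCommGroup G] {n : ℕ} {e : G} {G0 : Set G} {s : G → ℕ}

theorem sum_eq_sum_map_nsmul (hs : ∀ h ∈ G0, s h • e = h) {S : Multiset G}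
    (hS : ∀ g ∈ S, g ∈ G0) : S.sum = (S.map s).sum • e := by
  rw [sum_smul, map_map]
  conv_lhs => rw [← map_id' S]
  exact congrArg sum (map_congr rfl fun h hh => (hs h (hS h hh)).symm)

theorem sum_eq_zero_iff_dvd (he : addOrderOf e = n) (hs : ∀ h ∈ G0, s h • e = h)
    {S : Multiset G} (hS : ∀ g ∈ S, g ∈ G0) : S.sum = 0 ↔ n ∣ (S.map s).sum := by
  rw [sum_eq_sum_map_nsmul hs hS, ← he, addOrderOf_dvd_iff_nsmul_eq_zero]

theorem sum_map_pos (hs : ∀ h ∈ G0, s h ∈ Finset.Icc 1 n ∧ s h • e = h) {S : Multiset G}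
    (hS0 : S ≠ 0) (hS : ∀ g ∈ S, g ∈ G0) : 0 < (S.map s).sum := by
  obtain ⟨g, hg⟩ := exists_mem_of_ne_zero hS0
  exact Nat.lt_of_lt_of_le (Finset.mem_Icc.1 (hs g (hS g hg)).1).1
    (le_sum_of_mem (mem_map_of_mem s hg))

theorem isMinZeroSum_of_sum_map_eq (he : addOrderOf e = n)
    (hs : ∀ h ∈ G0, s h ∈ Finset.Icc 1 n ∧ s h • e = h) {S : Multiset G} (hS0 : S ≠ 0)
    (hS : ∀ g ∈ S, g ∈ G0) (hσ : (S.map s).sum = n) : IsMinZeroSum G0 S := by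
  have hzero : ∀ T ≤ S, T.sum = 0 ↔ n ∣ (T.map s).sum := fun T hT =>
    sum_eq_zero_iff_dvd he (fun h hh => (hs h hh).2) fun g hg => hS g (mem_of_le hT hg)
  refine ⟨hS0, ⟨hS, (hzero S le_rfl).2 (hσ ▸ dvd_rfl)⟩, fun T hTS hT0 hTS' hT => ?_⟩
  -- Both parts of `S = T + U` would have `σ ≥ n`, while `σ(S) = n`.
  obtain ⟨U, rfl⟩ := Multiset.le_iff_exists_add.1 hTS
  have hU0 : U ≠ 0 := by
    rintro rfl
    exact hTS' (add_zero T).symm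
  have hU : U.sum = 0 := by
    simpa [hT] using ((hzero _ le_rfl).2 (hσ ▸ dvd_rfl))
  have hUS : U ≤ T + U := le_add_left le_rfl
  have hTpos := sum_map_pos hs hT0 fun g hg => hS g (mem_of_le hTS hg)
  have hUpos := sum_map_pos hs hU0 fun g hg => hS g (mem_of_le hUS hg)
  have hTn := Nat.le_of_dvd hTpos ((hzero T hTS).1 hT)
  have hUn := Nat.le_of_dvd hUpos ((hzero U hUS).1 hU)
  rw [map_add, sum_add] at hσ
  omega

theorem apply_self_eq_one (he : addOrderOf e = n) (heG : e ∈ G0)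
    (hs : ∀ h ∈ G0, s h ∈ Finset.Icc 1 n ∧ s h • e = h) : s e = 1 := by
  obtain ⟨hIcc, hse⟩ := hs e heG
  rw [Finset.mem_Icc] at hIcc
  have hmod : 1 ≡ s e [MOD n] := he ▸ nsmul_eq_nsmul_iff_modEq.1 (by rw [one_nsmul, hse])
  have := Nat.eq_zero_of_dvd_of_lt ((Nat.modEq_iff_dvd' hIcc.1).1 hmod) (by omega)
  omega

theorem isMinZeroSum_cons_replicate (he : addOrderOf e = n) (heG : e ∈ G0)
    (hs : ∀ h ∈ G0, s h ∈ Finset.Icc 1 n ∧ s h • e = h) {h : G} (hh : h ∈ G0) :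
    IsMinZeroSum G0 (h ::ₘ replicate (n - s h) e) := by
  refine isMinZeroSum_of_sum_map_eq he hs cons_ne_zero ?_ ?_
  · exact forall_mem_cons.2 ⟨hh, fun g hg => eq_of_mem_replicate hg ▸ heG⟩
  · have := (Finset.mem_Icc.1 (hs h hh).1).2
    rw [map_cons, sum_cons, map_replicate, sum_replicate, apply_self_eq_one he heG hs,
      smul_eq_mul, mul_one]
    omega

theorem isMinZeroSum_replicate (he : addOrderOf e = n) (heG : e ∈ G0)
    (hs : ∀ h ∈ G0, s h ∈ Finset.Icc 1 n ∧ s h • e = h) : IsMinZeroSum G0 (replicate n e) := by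
  have hn := Finset.mem_Icc.1 (hs e heG).1
  have := isMinZeroSum_cons_replicate he heG hs heG
  rwa [← replicate_succ, apply_self_eq_one he heG hs, Nat.sub_add_cancel (hn.1.trans hn.2)]
    at this

theorem sum_map_eq_of_isMinZeroSum (he : addOrderOf e = n)
    (hs : ∀ h ∈ G0, s h ∈ Finset.Icc 1 n ∧ s h • e = h) {A : Multiset G}
    (hA : IsMinZeroSum G0 A) : (A.map s).sum = n * ((A.map s).sum / n - 1 + 1) := by
  have hpos := sum_map_pos hs hA.1 hA.2.1.1
  obtain ⟨k, hk⟩ := (sum_eq_zero_iff_dvd he (fun h hh => (hs h hh).2) hA.2.1.1).1 hA.2.1.2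
  rcases n.eq_zero_or_pos with rfl | hn
  · simp [hk] at hpos
  have hk0 : k ≠ 0 := by
    rintro rfl
    simp [hk] at hpos
  rw [hk, Nat.mul_div_cancel_left k hn, Nat.sub_add_cancel (Nat.one_le_iff_ne_zero.2 hk0)]

theorem minDelta_dvd_sum_map_div_sub_one (he : addOrderOf e = n) (heG : e ∈ G0)
    (hs : ∀ h ∈ G0, s h ∈ Finset.Icc 1 n ∧ s h • e = h) {A : Multiset G}
    (hA : IsMinZeroSum G0 A) : minDelta G0 ∣ (A.map s).sum / n - 1 := by
  set t := (A.map s).sum / n - 1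
  set r := (A.map fun h => n - s h).sum
  have hr : r + n * (t + 1) = n * card A := by
    rw [← sum_map_eq_of_isMinZeroSum he hs hA, ← sum_map_add,
      map_congr rfl fun h hh => Nat.sub_add_cancel (Finset.mem_Icc.1 (hs h (hA.2.1.1 h hh)).1).2,
      map_const', sum_replicate, smul_eq_mul, mul_comm]
  have hn : 0 < n := Finset.nonempty_Icc.1 ⟨s e, (hs e heG).1⟩
  have ht : t + 1 ≤ card A := Nat.le_of_mul_le_mul_left (hr ▸ Nat.le_add_left _ _) hn
  set w := card A - (t + 1)
  have hw : replicate r e = w • replicate n e := by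
    rw [nsmul_replicate, Nat.mul_comm, Nat.mul_sub, ← hr, Nat.add_sub_cancel]
  have hen := isMinZeroSum_replicate he heG hs
  have hB : IsZeroSumSeq G0 (A + replicate r e) := hw ▸ hA.2.1.add (hen.2.1.nsmul w)
  have hlen₁ : card A ∈ LengthSet G0 (A + replicate r e) := by
    refine ⟨A.map fun h => h ::ₘ replicate (n - s h) e, card_map _ _, ?_,
      sum_map_cons_replicate e _ A⟩
    simp only [mem_map]
    rintro _ ⟨h, hh, rfl⟩
    exact isMinZeroSum_cons_replicate he heG hs (hA.2.1.1 h hh)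
  have hlen₂ : 1 + w * 1 ∈ LengthSet G0 (A + replicate r e) :=
    hw ▸ add_mem_lengthSet (one_mem_lengthSet hA) (nsmul_mem_lengthSet (one_mem_lengthSet hen) w)
  have := minDelta_dvd_sub_of_mem_lengthSet hB hlen₂ hlen₁ (by omega)
  rwa [show card A - (1 + w * 1) = t by omega] at this

theorem sum_map_sum_eq (he : addOrderOf e = n)
    (hs : ∀ h ∈ G0, s h ∈ Finset.Icc 1 n ∧ s h • e = h) {F : Multiset (Multiset G)}
    (hF : ∀ A ∈ F, IsMinZeroSum G0 A) :
    (F.sum.map s).sum = n * (card F + (F.map fun A => (A.map s).sum / n - 1).sum) := by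
  induction F using Multiset.induction with
  | empty => simp
  | cons A F ih =>
    rw [forall_mem_cons] at hF
    have hA := sum_map_eq_of_isMinZeroSum he hs hF.1
    rw [sum_cons, map_add, sum_add, ih hF.2, map_cons, sum_cons, card_cons]
    generalize (A.map s).sum / n - 1 = t at hA ⊢
    rw [hA]
    ring

theorem modEq_of_mem_lengthSet_s2 (he : addOrderOf e = n)
    (hs : ∀ h ∈ G0, s h ∈ Finset.Icc 1 n ∧ s h • e = h) (hn : 0 < n) {m : ℕ}
    (hm : ∀ A, IsMinZeroSum G0 A → m ∣ (A.map s).sum / n - 1) {B : Multiset G} {k : ℕ}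
    (hk : k ∈ LengthSet G0 B) : k ≡ (B.map s).sum / n [MOD m] := by
  obtain ⟨F, rfl, hF, rfl⟩ := hk
  rw [sum_map_sum_eq he hs hF, Nat.mul_div_cancel_left _ hn,
    Nat.modEq_iff_dvd' (Nat.le_add_right _ _), Nat.add_sub_cancel_left]
  refine dvd_sum fun _ hx => ?_
  obtain ⟨A, hA, rfl⟩ := mem_map.1 hx
  exact hm A (hF A hA)

end Cyclic

theorem stmt_2_general {G : Type*} [AddCommGroup G] (n : ℕ)
    (e : G) (he : addOrderOf e = n)
    (G0 : Set G) (heG : e ∈ G0)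
    (s : G → ℕ) (hs : ∀ h ∈ G0, s h ∈ Finset.Icc 1 n ∧ s h • e = h) :
    (∀ A : Multiset G, IsMinZeroSum G0 A → minDelta G0 ∣ (A.map s).sum / n - 1) ∧
    ∀ m : ℕ, (∀ A : Multiset G, IsMinZeroSum G0 A → m ∣ (A.map s).sum / n - 1) →
      m ∣ minDelta G0 := by
  have hn : 0 < n := Finset.nonempty_Icc.1 ⟨s e, (hs e heG).1⟩
  refine ⟨fun A hA => minDelta_dvd_sum_map_div_sub_one he heG hs hA, fun m hm => ?_⟩
  exact dvd_minDelta_of_forall_modEq fun B _ a ha b hb =>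
    (modEq_of_mem_lengthSet_s2 he hs hn hm ha).trans (modEq_of_mem_lengthSet_s2 he hs hn hm hb).symm

/-- For `G0` containing a generator `e`, `min Δ(B(G0))` equals the
gcd over all minimal zero-sum sequences `A` over `G0` of `σ_e(A)/n - 1`, where
`σ_e` sums the representatives `s_e(h) ∈ [1,n]` with `h = s_e(h)•e`.
The gcd is expressed via its universal property in the divisibility order. -/
theorem stmt_2 {G : Type*} [AddCommGroup G] [Fintype G] (n : ℕ)
    (hcard : Fintype.card G = n) (e : G) (he : addOrderOf e = n)
    (G0 : Set G) (heG : e ∈ G0)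
    (s : G → ℕ) (hs : ∀ h ∈ G0, s h ∈ Finset.Icc 1 n ∧ s h • e = h) :
    (∀ A : Multiset G, IsMinZeroSum G0 A → minDelta G0 ∣ (A.map s).sum / n - 1) ∧
    ∀ m : ℕ, (∀ A : Multiset G, IsMinZeroSum G0 A → m ∣ (A.map s).sum / n - 1) →
      m ∣ minDelta G0 :=
  stmt_2_general n e he G0 heG s hs
end

section
/- Let H be an atomic commutative cancellative monoid. Then min Δ(H) = gcd Δ(H), where Δ(H) is the set of successive distances in sets of lengths of elements of H (assuming Δ(H) is nonempty). -/
open Multiset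

/-- Sets of lengths of factorizations into irreducibles in a monoid. -/
def LengthSetM {H : Type*} [CancelCommMonoid H] (a : H) : Set ℕ :=
  { k | ∃ l : List H, l.length = k ∧ (∀ x ∈ l, Irreducible x) ∧ l.prod = a }

/-- The set of distances of a monoid. -/
def DeltaH (H : Type*) [CancelCommMonoid H] : Set ℕ :=
  ⋃ a : H, DeltaOf (LengthSetM a)

lemma exists_consec_aux (L : Set ℕ) :
    ∀ n : ℕ, ∀ l1 ∈ L, ∀ l2 ∈ L, l1 < l2 → l2 - l1 ≤ n →
      ∃ d ∈ DeltaOf L, d ≤ l2 - l1 := by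
  intro n
  induction n with
  | zero => intro l1 _ l2 _ h hle; omega
  | succ n ih =>
    intro l1 h1 l2 h2 hlt hle
    by_cases hc : ∃ c ∈ L, l1 < c ∧ c < l2
    · obtain ⟨c, hcL, h1c, hc2⟩ := hc
      obtain ⟨d, hd, hdle⟩ := ih l1 h1 c hcL h1c (by omega)
      exact ⟨d, hd, by omega⟩
    · push_neg at hc
      exact ⟨l2 - l1, ⟨l1, h1, l2, h2, hlt, rfl,
        fun c hcL h => by have := hc c hcL h.1; omega⟩, le_refl _⟩

lemma lengthSetM_mul {H : Type*} [CancelCommMonoid H] {a b : H} {k j : ℕ}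
    (hk : k ∈ LengthSetM a) (hj : j ∈ LengthSetM b) :
    k + j ∈ LengthSetM (a * b) := by
  obtain ⟨l, hl, hli, hlp⟩ := hk
  obtain ⟨l', hl', hli', hlp'⟩ := hj
  refine ⟨l ++ l', by simp [hl, hl'], fun x hx => ?_, by simp [hlp, hlp']⟩
  rcases List.mem_append.1 hx with h | h
  · exact hli x h
  · exact hli' x h

lemma lengthSetM_pow {H : Type*} [CancelCommMonoid H] {b : H} {u : ℕ}
    (hu : u ∈ LengthSetM b) : ∀ q : ℕ, q * u ∈ LengthSetM (b ^ q) := by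
  intro q
  induction q with
  | zero => exact ⟨[], by simp, by simp, by simp⟩
  | succ q ih =>
    have := lengthSetM_mul ih hu
    rw [pow_succ, Nat.succ_mul]
    exact this

/-- In an atomic commutative cancellative monoid,
`min Δ(H) = gcd Δ(H)`: the minimum of the (nonempty) set of distances
divides every distance. -/
theorem stmt_3 {H : Type*} [CancelCommMonoid H]
    (hatomic : ∀ a : H, ¬IsUnit a →
      ∃ l : List H, (∀ x ∈ l, Irreducible x) ∧ l.prod = a)
    (hne : (DeltaH H).Nonempty) :
    ∀ d ∈ DeltaH H, sInf (DeltaH H) ∣ d := by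
  intro d hd
  set m := sInf (DeltaH H) with hm
  have hmem : m ∈ DeltaH H := Nat.sInf_mem hne
  -- every element of DeltaH is ≥ m and > 0
  have hpos : ∀ e ∈ DeltaH H, 0 < e := by
    intro e he
    obtain ⟨S, x, hx, y, hy, hxy, hsub, -⟩ := Set.mem_iUnion.1 he
    omega
  have hge : ∀ e ∈ DeltaH H, m ≤ e := fun e he => Nat.sInf_le he
  have hmpos : 0 < m := hpos m hmem
  -- unpack d
  obtain ⟨a, ha⟩ := Set.mem_iUnion.1 hd
  obtain ⟨x, hx, y, hy, hxy, hdsub, -⟩ := ha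
  -- unpack m
  obtain ⟨b, hb⟩ := Set.mem_iUnion.1 hmem
  obtain ⟨u, hu, v, hv, huv, hmsub, -⟩ := hb
  -- v = u + m
  set q := d / m with hq
  set r := d % m with hr
  rcases Nat.eq_zero_or_pos r with h0 | hrpos
  · exact ⟨q, by have h := Nat.div_add_mod d m; rw [← hq, ← hr] at h; omega⟩
  exfalso
  have hdq : d = m * q + r := by have h := Nat.div_add_mod d m; rw [← hq, ← hr] at h; omega
  have hqm : q * m = m * q := Nat.mul_comm _ _
  have hqvm : q * v = q * u + q * m := by
    have : v = u + m := by omega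
    rw [this]; ring
  -- element c = a * b ^ q has lengths x + q*v and y + q*u
  have h1 : x + q * v ∈ LengthSetM (a * b ^ q) :=
    lengthSetM_mul hx (lengthSetM_pow hv q)
  have h2 : y + q * u ∈ LengthSetM (a * b ^ q) :=
    lengthSetM_mul hy (lengthSetM_pow hu q)
  have hlt : x + q * v < y + q * u := by omega
  obtain ⟨d', hd', hdle⟩ := exists_consec_aux (LengthSetM (a * b ^ q))
    ((y + q * u) - (x + q * v)) _ h1 _ h2 hlt (le_refl _)
  have hd'H : d' ∈ DeltaH H := Set.mem_iUnion.2 ⟨a * b ^ q, hd'⟩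
  have hmd' : m ≤ d' := hge d' hd'H
  have hrm : r < m := Nat.mod_lt d hmpos
  omega
end

section
/- Let G be an abelian torsion group and G0 ⊆ G. The monoid of zero-sum sequences over G0 is half-factorial if and only if every minimal zero-sum sequence A over G0 has cross number k(A) = 1, where k(A) = Σ_{g} v_g(A)/ord(g). -/
/-!
The cross number is additive, so if every minimal zero-sum sequence has cross number `1`, every
factorization of `B` has length `k(B)`.

Conversely, let `A` be minimal and `N` the product of the orders of its elements. Then `N • A`
factors both as `N` copies of `A` and into the blocks `g ^ ord(g)`; the latter factorization has
length `k(N • A) = N · k(A)`, so half-factoriality forces `k(A) = 1`.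
-/

open Multiset

section CrossNumber

variable {G : Type*} [AddCommGroup G]

lemma crossNum_add (S T : Multiset G) : crossNum (S + T) = crossNum S + crossNum T := by
  simp only [crossNum, map_add, sum_add]

lemma crossNum_nsmul (n : ℕ) (S : Multiset G) : crossNum (n • S) = n * crossNum S := by
  simp only [crossNum, map_nsmul, sum_nsmul, nsmul_eq_mul]

lemma crossNum_sum (F : Multiset (Multiset G)) : crossNum F.sum = (F.map crossNum).sum := by
  induction F using Multiset.induction with
  | empty => simp [crossNum]
  | cons A F ih => simp [crossNum_add, ih]

lemma crossNum_eq_sum_count [DecidableEq G] (S : Multiset G) :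
    crossNum S = ∑ g ∈ S.toFinset, (S.count g : ℚ) / addOrderOf g := by
  simp only [crossNum, Finset.sum_multiset_map_count, nsmul_eq_mul, mul_one_div]

lemma addOrderOf_pos_of_dvd_count [DecidableEq G] {S : Multiset G} {g : G} (hg : g ∈ S)
    (hdvd : addOrderOf g ∣ S.count g) : 0 < addOrderOf g :=
  Nat.pos_of_dvd_of_pos hdvd (count_pos.mpr hg)

lemma crossNum_eq_sum_count_div [DecidableEq G] {S : Multiset G}
    (hdvd : ∀ g ∈ S, addOrderOf g ∣ S.count g) :
    crossNum S = ((∑ g ∈ S.toFinset, S.count g / addOrderOf g : ℕ) : ℚ) := by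
  rw [crossNum_eq_sum_count, Nat.cast_sum]
  refine Finset.sum_congr rfl fun g hg => ?_
  have hg : g ∈ S := mem_toFinset.mp hg
  have hord : (addOrderOf g : ℚ) ≠ 0 := by
    exact_mod_cast (addOrderOf_pos_of_dvd_count hg (hdvd g hg)).ne'
  rw [Nat.cast_div (hdvd g hg) hord]

end CrossNumber

section Factorization

variable {G : Type*} [AddCommGroup G] {G0 : Set G}

lemma isMinZeroSum_replicate_addOrderOf {g : G} (hg : g ∈ G0) (hpos : 0 < addOrderOf g) :
    IsMinZeroSum G0 (replicate (addOrderOf g) g) := by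
  refine ⟨fun h => hpos.ne' (by simpa using congrArg card h),
    ⟨fun x hx => eq_of_mem_replicate hx ▸ hg, ?_⟩, ?_⟩
  · rw [sum_replicate, addOrderOf_nsmul_eq_zero]
  · intro T hT hT0 hTS
    obtain ⟨k, hk, rfl⟩ := le_replicate_iff.mp hT
    have hk0 : 0 < k := Nat.pos_of_ne_zero fun h => hT0 (by simp [h])
    have hklt : k < addOrderOf g := lt_of_le_of_ne hk fun h => hTS (h ▸ rfl)
    rw [sum_replicate]
    exact fun h => (addOrderOf_le_of_nsmul_eq_zero hk0 h).not_gt hklt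

lemma nsmul_mem_lengthSet_s5 {A : Multiset G} (hA : IsMinZeroSum G0 A) (n : ℕ) :
    n ∈ LengthSet G0 (n • A) :=
  ⟨replicate n A, card_replicate n A, fun _ hB => eq_of_mem_replicate hB ▸ hA,
    sum_replicate n A⟩

lemma exists_mem_lengthSet_eq_crossNum [DecidableEq G] {S : Multiset G}
    (hS : ∀ g ∈ S, g ∈ G0) (hdvd : ∀ g ∈ S, addOrderOf g ∣ S.count g) :
    ∃ k ∈ LengthSet G0 S, (k : ℚ) = crossNum S := by
  refine ⟨∑ g ∈ S.toFinset, S.count g / addOrderOf g,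
    ⟨∑ g ∈ S.toFinset, replicate (S.count g / addOrderOf g) (replicate (addOrderOf g) g),
      ?_, ?_, ?_⟩, (crossNum_eq_sum_count_div hdvd).symm⟩
  · simp only [card_sum, card_replicate]
  · intro B hB
    obtain ⟨g, hg, hB⟩ := mem_sum.mp hB
    have hg : g ∈ S := mem_toFinset.mp hg
    rw [eq_of_mem_replicate hB]
    exact isMinZeroSum_replicate_addOrderOf (hS g hg) (addOrderOf_pos_of_dvd_count hg (hdvd g hg))
  · conv_rhs => rw [← toFinset_sum_count_nsmul_eq S]
    rw [sum_sum]
    refine Finset.sum_congr rfl fun g hg => ?_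
    rw [sum_replicate, nsmul_replicate, Nat.div_mul_cancel (hdvd g (mem_toFinset.mp hg)),
      nsmul_singleton]

end Factorization

section HalfFactorial

variable {G : Type*} [AddCommGroup G] {G0 : Set G}

lemma halfFactorial_of_forall_crossNum_eq_one
    (h : ∀ A : Multiset G, IsMinZeroSum G0 A → crossNum A = 1) : HalfFactorial G0 := by
  have hlen : ∀ B, ∀ k ∈ LengthSet G0 B, (k : ℚ) = crossNum B := by
    rintro B _ ⟨F, rfl, hF, rfl⟩
    rw [crossNum_sum, map_congr rfl fun A hA => h A (hF A hA)]
    simp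
  intro B _ k hk l hl
  exact_mod_cast (hlen B k hk).trans (hlen B l hl).symm

lemma crossNum_eq_one_of_halfFactorial (hHF : HalfFactorial G0) {A : Multiset G}
    (hA : IsMinZeroSum G0 A) (hfin : ∀ g ∈ A, IsOfFinAddOrder g) : crossNum A = 1 := by
  classical
  obtain ⟨hAG0, hAsum⟩ := hA.2.1
  set N := (A.map addOrderOf).prod
  have hN : 0 < N := prod_pos fun n hn => by
    obtain ⟨g, hg, rfl⟩ := mem_map.mp hn
    exact (hfin g hg).addOrderOf_pos
  have hNA : IsZeroSumSeq G0 (N • A) :=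
    ⟨fun g hg => hAG0 g (mem_nsmul.mp hg).2, by rw [sum_nsmul, hAsum, smul_zero]⟩
  have hdvd : ∀ g ∈ N • A, addOrderOf g ∣ (N • A).count g := fun g hg => by
    rw [count_nsmul]
    exact (dvd_prod (mem_map_of_mem _ (mem_nsmul.mp hg).2)).mul_right _
  obtain ⟨k, hk, hkN⟩ := exists_mem_lengthSet_eq_crossNum hNA.1 hdvd
  have hNk : N = k := hHF _ hNA N (nsmul_mem_lengthSet_s5 hA N) k hk
  rw [crossNum_nsmul, ← hNk] at hkN
  have hN' : (N : ℚ) ≠ 0 := by exact_mod_cast hN.ne'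
  exact (mul_eq_left₀ hN').mp hkN.symm

end HalfFactorial

/-- For an abelian torsion group `G` and `G0 ⊆ G`, the monoid of
zero-sum sequences over `G0` is half-factorial iff every minimal zero-sum
sequence over `G0` has cross number `1`. -/
theorem stmt_5 {G : Type*} [AddCommGroup G]
    (htor : ∀ g : G, IsOfFinAddOrder g) (G0 : Set G) :
    HalfFactorial G0 ↔
      ∀ A : Multiset G, IsMinZeroSum G0 A → crossNum A = 1 :=
  ⟨fun hHF _ hA => crossNum_eq_one_of_halfFactorial hHF hA fun g _ => htor g,
    halfFactorial_of_forall_crossNum_eq_one⟩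
end

section
/- Let p be a prime, G = C_p ⊕ C_p with independent generators e1, e2, and G1 = {e1, e2, -e1 + e2}. Then the set of minimal zero-sum sequences over G1 equals { e1^j (-e1+e2)^j e2^{p-j} : j ∈ [1, p-1] } ∪ { e1^p, e2^p, (-e1+e2)^p }, and consequently the set of cross numbers of minimal zero-sum sequences over G1 is { j/p : j ∈ [p, 2p-1] }. -/
open Multiset

/-!
A sequence over `G₁` is `e₁^a g^b e₂^c`, with sum `(a - b, b + c)`, so it is zero-sum iff
`a ≡ b [MOD p]` and `p ∣ b + c`. Every nonzero exponent triple with these properties dominates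
one of `(j, j, p - j)` (`0 < j < p`), `(p, 0, 0)`, `(0, 0, p)`, `(0, p, 0)`: if all exponents
are `< p`, the congruences force `b = a` and `b + c = p`. These triples are pairwise
incomparable, so they are exactly the exponents of minimal zero-sum sequences. Their lengths
fill `[p, 2p - 1]`, and every element of `G₁` has order `p`, which gives the cross numbers.
-/

theorem crossNum_eq_card_div {G : Type*} [AddCommGroup G] {S : Multiset G} {n : ℕ}
    (h : ∀ x ∈ S, addOrderOf x = n) : crossNum S = card S / n := by
  rw [crossNum, map_congr rfl fun x hx => by rw [h x hx], map_const', sum_replicate,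
    nsmul_eq_mul, mul_one_div]

theorem Nat.eq_zero_or_eq_of_dvd_of_lt_two_mul {p n : ℕ} (h : p ∣ n) (hn : n < 2 * p) :
    n = 0 ∨ n = p := by
  obtain ⟨k, rfl⟩ := h
  have hk : k < 2 := by nlinarith
  interval_cases k <;> simp

namespace CpCp

/-- The exponent triples `(a, b, c)` for which `e₁^a g^b e₂^c` is a minimal zero-sum sequence
(an atom of the monoid of zero-sum sequences over `G₁`). -/
def IsAtom (p a b c : ℕ) : Prop :=
  (0 < a ∧ a < p ∧ b = a ∧ c = p - a) ∨ (a = p ∧ b = 0 ∧ c = 0) ∨ (a = 0 ∧ b = 0 ∧ c = p) ∨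
    (a = 0 ∧ b = p ∧ c = 0)

section Atoms

variable {p a b c : ℕ}

theorem IsAtom.modEq (h : IsAtom p a b c) : a ≡ b [MOD p] := by
  rcases h with ⟨-, -, rfl, -⟩ | ⟨rfl, rfl, -⟩ | ⟨rfl, rfl, -⟩ | ⟨rfl, rfl, -⟩ <;>
    simp [Nat.ModEq]

theorem IsAtom.dvd_add (h : IsAtom p a b c) : p ∣ b + c := by
  rcases h with ⟨-, hap, rfl, rfl⟩ | ⟨-, rfl, rfl⟩ | ⟨-, rfl, rfl⟩ | ⟨-, rfl, rfl⟩
  · rw [Nat.add_sub_cancel' hap.le]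
  all_goals simp

theorem IsAtom.ne_zero (hp : 0 < p) (h : IsAtom p a b c) : ¬(a = 0 ∧ b = 0 ∧ c = 0) := by
  unfold IsAtom at h
  omega

theorem IsAtom.eq_of_le {a' b' c' : ℕ} (h : IsAtom p a b c) (h' : IsAtom p a' b' c')
    (ha : a' ≤ a) (hb : b' ≤ b) (hc : c' ≤ c) : a' = a ∧ b' = b ∧ c' = c := by
  unfold IsAtom at h h'
  omega

theorem exists_isAtom_le (hne : ¬(a = 0 ∧ b = 0 ∧ c = 0)) (hab : a ≡ b [MOD p])
    (hbc : p ∣ b + c) : ∃ a' b' c', IsAtom p a' b' c' ∧ a' ≤ a ∧ b' ≤ b ∧ c' ≤ c := by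
  rcases le_or_gt p a with ha | ha
  · exact ⟨p, 0, 0, by simp [IsAtom], ha, by omega, by omega⟩
  rcases le_or_gt p c with hc | hc
  · exact ⟨0, 0, p, by simp [IsAtom], by omega, by omega, hc⟩
  rcases le_or_gt p b with hb | hb
  · exact ⟨0, p, 0, by simp [IsAtom], by omega, hb, by omega⟩
  have hab : a = b := hab.eq_of_lt_of_lt ha hb
  rcases Nat.eq_zero_or_eq_of_dvd_of_lt_two_mul hbc (by omega) with h | h
  · omega
  · exact ⟨a, b, c, Or.inl ⟨by omega, ha, hab.symm, by omega⟩, le_rfl, le_rfl, le_rfl⟩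

theorem exists_isAtom_add_eq_iff {n : ℕ} :
    (∃ a b c, IsAtom p a b c ∧ a + b + c = n) ↔ p ≤ n ∧ n ≤ 2 * p - 1 := by
  constructor
  · rintro ⟨a, b, c, h, rfl⟩
    unfold IsAtom at h
    omega
  · rintro ⟨h₁, h₂⟩
    rcases h₁.eq_or_lt with rfl | h₁
    · exact ⟨p, 0, 0, by simp [IsAtom], by simp⟩
    · exact ⟨n - p, n - p, 2 * p - n, Or.inl ⟨by omega, by omega, rfl, by omega⟩, by omega⟩

end Atoms

variable (p : ℕ)

def e₁ : ZMod p × ZMod p := (1, 0)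

def e₂ : ZMod p × ZMod p := (0, 1)

def g : ZMod p × ZMod p := -e₁ p + e₂ p

def G₁ : Set (ZMod p × ZMod p) := {e₁ p, e₂ p, g p}

def word (a b c : ℕ) : Multiset (ZMod p × ZMod p) :=
  replicate a (e₁ p) + replicate b (g p) + replicate c (e₂ p)

variable {p} {a b c : ℕ}

theorem mem_G₁_of_mem_word {x : ZMod p × ZMod p} (hx : x ∈ word p a b c) : x ∈ G₁ p := by
  simp only [word, mem_add, mem_replicate] at hx
  rcases hx with (⟨-, rfl⟩ | ⟨-, rfl⟩) | ⟨-, rfl⟩ <;> simp [G₁]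

theorem card_word : card (word p a b c) = a + b + c := by
  simp [word]

theorem word_eq_zero_iff : word p a b c = 0 ↔ a = 0 ∧ b = 0 ∧ c = 0 := by
  rw [← card_eq_zero, card_word]
  omega

theorem sum_word_eq_zero_iff : (word p a b c).sum = 0 ↔ a ≡ b [MOD p] ∧ p ∣ b + c := by
  have hsum : (word p a b c).sum = ((a : ZMod p) - b, ((b + c : ℕ) : ZMod p)) := by
    simp [word, e₁, e₂, g, Prod.ext_iff]
    ring
  rw [hsum, Prod.mk_eq_zero, sub_eq_zero, ZMod.natCast_eq_natCast_iff, ZMod.natCast_eq_zero_iff]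

theorem IsAtom.sum_word_eq_zero (h : IsAtom p a b c) : (word p a b c).sum = 0 :=
  sum_word_eq_zero_iff.2 ⟨h.modEq, h.dvd_add⟩

theorem IsAtom.word_ne_zero (hp : 0 < p) (h : IsAtom p a b c) : word p a b c ≠ 0 :=
  word_eq_zero_iff.not.2 (h.ne_zero hp)

section Counts

variable [Fact (1 < p)]

theorem count_e₁_word : count (e₁ p) (word p a b c) = a := by
  simp [word, count_replicate, e₁, e₂, g, Prod.ext_iff]

theorem count_g_word : count (g p) (word p a b c) = b := by
  simp [word, count_replicate, e₁, e₂, g, Prod.ext_iff]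

theorem count_e₂_word : count (e₂ p) (word p a b c) = c := by
  simp [word, count_replicate, e₁, e₂, g, Prod.ext_iff]

theorem ne_zero_of_mem_G₁ {x : ZMod p × ZMod p} (hx : x ∈ G₁ p) : x ≠ 0 := by
  rcases hx with rfl | rfl | rfl <;> simp [e₁, e₂, g, Prod.ext_iff]

theorem word_le_word_iff {a' b' c' : ℕ} :
    word p a' b' c' ≤ word p a b c ↔ a' ≤ a ∧ b' ≤ b ∧ c' ≤ c := by
  refine ⟨fun h => ?_, fun ⟨ha, hb, hc⟩ => ?_⟩
  · have h₁ := count_le_of_le (e₁ p) h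
    have h₂ := count_le_of_le (g p) h
    have h₃ := count_le_of_le (e₂ p) h
    simp only [count_e₁_word, count_g_word, count_e₂_word] at h₁ h₂ h₃
    exact ⟨h₁, h₂, h₃⟩
  · exact add_le_add (add_le_add (replicate_le_replicate _ |>.2 ha)
      (replicate_le_replicate _ |>.2 hb)) (replicate_le_replicate _ |>.2 hc)

theorem eq_word_of_forall_mem_G₁ {A : Multiset (ZMod p × ZMod p)} (hA : ∀ x ∈ A, x ∈ G₁ p) :
    A = word p (count (e₁ p) A) (count (g p) A) (count (e₂ p) A) := by
  ext x
  by_cases hx : x ∈ G₁ p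
  · rcases hx with rfl | rfl | rfl
    · rw [count_e₁_word]
    · rw [count_e₂_word]
    · rw [count_g_word]
  · rw [count_eq_zero_of_notMem (mt (hA x) hx), count_eq_zero_of_notMem (mt mem_G₁_of_mem_word hx)]

theorem exists_isAtom_word_le {T : Multiset (ZMod p × ZMod p)} (hT : ∀ x ∈ T, x ∈ G₁ p)
    (hT0 : T ≠ 0) (hsum : T.sum = 0) : ∃ a b c, IsAtom p a b c ∧ word p a b c ≤ T := by
  rw [eq_word_of_forall_mem_G₁ hT] at hT0 hsum ⊢
  rw [Ne, word_eq_zero_iff] at hT0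
  rw [sum_word_eq_zero_iff] at hsum
  obtain ⟨a, b, c, h, hle⟩ := exists_isAtom_le hT0 hsum.1 hsum.2
  exact ⟨a, b, c, h, word_le_word_iff.2 hle⟩

theorem isMinZeroSum_word_iff : IsMinZeroSum (G₁ p) (word p a b c) ↔ IsAtom p a b c := by
  have hp : 0 < p := Nat.zero_lt_of_lt (Fact.out : 1 < p)
  constructor
  · rintro ⟨hne, ⟨-, hsum⟩, hmin⟩
    obtain ⟨a', b', c', h, hle⟩ := exists_isAtom_word_le (fun _ => mem_G₁_of_mem_word) hne hsum
    have heq : word p a' b' c' = word p a b c := by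
      by_contra hne'
      exact hmin _ hle (h.word_ne_zero hp) hne' h.sum_word_eq_zero
    have := word_le_word_iff.1 hle
    have := word_le_word_iff.1 heq.ge
    obtain ⟨rfl, rfl, rfl⟩ : a' = a ∧ b' = b ∧ c' = c := by omega
    exact h
  · intro h
    refine ⟨h.word_ne_zero hp, ⟨fun _ => mem_G₁_of_mem_word, h.sum_word_eq_zero⟩,
      fun T hle hT0 hne hsum => ?_⟩
    obtain ⟨a', b', c', h', hle'⟩ :=
      exists_isAtom_word_le (fun _ hx => mem_G₁_of_mem_word (mem_of_le hle hx)) hT0 hsum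
    have ⟨ha, hb, hc⟩ := word_le_word_iff.1 (hle'.trans hle)
    obtain ⟨rfl, rfl, rfl⟩ := h.eq_of_le h' ha hb hc
    exact hne (le_antisymm hle hle')

theorem isMinZeroSum_iff_exists_isAtom {A : Multiset (ZMod p × ZMod p)} :
    IsMinZeroSum (G₁ p) A ↔ ∃ a b c, IsAtom p a b c ∧ A = word p a b c := by
  constructor
  · intro hA
    have hA' := eq_word_of_forall_mem_G₁ hA.2.1.1
    rw [hA'] at hA
    exact ⟨_, _, _, isMinZeroSum_word_iff.1 hA, hA'⟩
  · rintro ⟨a, b, c, h, rfl⟩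
    exact isMinZeroSum_word_iff.2 h

theorem isMinZeroSum_iff {A : Multiset (ZMod p × ZMod p)} :
    IsMinZeroSum (G₁ p) A ↔
      (∃ j : ℕ, 1 ≤ j ∧ j ≤ p - 1 ∧ A = word p j j (p - j)) ∨
        A = replicate p (e₁ p) ∨ A = replicate p (e₂ p) ∨ A = replicate p (g p) := by
  rw [isMinZeroSum_iff_exists_isAtom]
  constructor
  · rintro ⟨a, b, c, ⟨ha, hap, rfl, rfl⟩ | ⟨rfl, rfl, rfl⟩ | ⟨rfl, rfl, rfl⟩ | ⟨rfl, rfl, rfl⟩, rfl⟩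
    · exact Or.inl ⟨_, ha, by omega, rfl⟩
    all_goals simp [word]
  · rintro (⟨j, hj₁, hj₂, rfl⟩ | rfl | rfl | rfl)
    · exact ⟨j, j, p - j, Or.inl ⟨hj₁, by omega, rfl, rfl⟩, rfl⟩
    · exact ⟨p, 0, 0, by simp [IsAtom], by simp [word]⟩
    · exact ⟨0, 0, p, by simp [IsAtom], by simp [word]⟩
    · exact ⟨0, p, 0, by simp [IsAtom], by simp [word]⟩

end Counts

theorem addOrderOf_eq_of_ne_zero [Fact p.Prime] {x : ZMod p × ZMod p} (hx : x ≠ 0) :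
    addOrderOf x = p :=
  addOrderOf_eq_prime (by ext <;> simp) hx

theorem crossNum_word [Fact p.Prime] : crossNum (word p a b c) = (a + b + c : ℕ) / p := by
  have h : ∀ x ∈ word p a b c, addOrderOf x = p := fun _ hx =>
    addOrderOf_eq_of_ne_zero (ne_zero_of_mem_G₁ (mem_G₁_of_mem_word hx))
  rw [crossNum_eq_card_div h, card_word]

end CpCp

/-- For `G = C_p ⊕ C_p` with independent generators `e1, e2` and
`G1 = {e1, e2, -e1+e2}`, the minimal zero-sum sequences over `G1` are exactly
`e1^j (-e1+e2)^j e2^(p-j)` for `j ∈ [1,p-1]` together with `e1^p, e2^p,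
(-e1+e2)^p`; consequently the set of their cross numbers is
`{j/p : j ∈ [p, 2p-1]}`. -/
theorem stmt_7 (p : ℕ) (hp : p.Prime) :
    let e1 : ZMod p × ZMod p := (1, 0)
    let e2 : ZMod p × ZMod p := (0, 1)
    let g : ZMod p × ZMod p := -e1 + e2
    let G1 : Set (ZMod p × ZMod p) := {e1, e2, g}
    ({ A : Multiset (ZMod p × ZMod p) | IsMinZeroSum G1 A } =
      { A | (∃ j : ℕ, 1 ≤ j ∧ j ≤ p - 1 ∧
              A = replicate j e1 + replicate j g + replicate (p - j) e2) ∨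
            A = replicate p e1 ∨ A = replicate p e2 ∨ A = replicate p g }) ∧
    ({ q : ℚ | ∃ A : Multiset (ZMod p × ZMod p),
        IsMinZeroSum G1 A ∧ crossNum A = q } =
      { q : ℚ | ∃ j : ℕ, p ≤ j ∧ j ≤ 2 * p - 1 ∧ q = (j : ℚ) / (p : ℚ) }) := by
  intro e1 e2 g G1
  have := Fact.mk hp
  refine ⟨Set.ext fun A => CpCp.isMinZeroSum_iff, Set.ext fun q => ⟨?_, ?_⟩⟩
  · rintro ⟨A, hA, rfl⟩
    obtain ⟨a, b, c, h, rfl⟩ := CpCp.isMinZeroSum_iff_exists_isAtom.1 hA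
    obtain ⟨h₁, h₂⟩ := CpCp.exists_isAtom_add_eq_iff.1 ⟨a, b, c, h, rfl⟩
    exact ⟨_, h₁, h₂, CpCp.crossNum_word⟩
  · rintro ⟨n, h₁, h₂, rfl⟩
    obtain ⟨a, b, c, h, rfl⟩ := CpCp.exists_isAtom_add_eq_iff.2 ⟨h₁, h₂⟩
    exact ⟨_, CpCp.isMinZeroSum_word_iff.2 h, CpCp.crossNum_word⟩
end

section
/- Let G be a finite cyclic group, G0 ⊆ G a subset that is not weakly half-factorial (i.e., some minimal zero-sum sequence over G0 has non-integral cross number). Then there exists a two-element subset G2 ⊆ G0 that is not weakly half-factorial. -/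
open Multiset

/-!
Fix a generator `e` of the cyclic group, of order `n`, and write each element as
`g = ((n / ord g) * u g) • e` with `u g` coprime to `ord g`.

If `{a, b}` is weakly half-factorial and `d = gcd (ord a) (ord b)`, pick `s < d` with
`d ∣ s * u a + u b`. The sequence of `(ord a / d) * s` copies of `a` and `ord b / d` copies of `b`
has sum zero and cross number `(s + 1) / d`, which must be an integer; hence `s = d - 1`, that is,
`u a ≡ u b [MOD d]`.

Conversely, these congruences on the support of a zero-sum sequence `S` force
`n ∣ n * k(S) = ∑ n / ord g`. For `p ^ v ∥ n`, take `g₀ ∈ S` whose order has maximal `p`-adic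
valuation. Then `p ^ v` divides every `(n / ord g) * (u g - u g₀)`, so `u g₀ * ∑ n / ord g` is
congruent modulo `p ^ v` to `∑ (n / ord g) * u g`, a multiple of `n`; and `p ∤ u g₀` unless `p`
divides no order in `S`, in which case `p ^ v` divides each `n / ord g` directly.
-/

section CrossNumber

variable {G : Type*} [AddCommGroup G]

lemma crossNum_replicate (k : ℕ) (g : G) :
    crossNum (replicate k g) = k / addOrderOf g := by
  simp [crossNum, div_eq_mul_inv]

lemma card_mul_crossNum [Fintype G] (S : Multiset G) :
    Fintype.card G * crossNum S =
      (((S.map fun g => Fintype.card G / addOrderOf g).sum : ℕ) : ℚ) := by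
  induction S using Multiset.induction_on with
  | empty => simp [crossNum]
  | cons g S ih =>
    rw [← singleton_add, crossNum_add, map_add, sum_add, Nat.cast_add, ← ih, map_singleton,
      sum_singleton, Nat.cast_div addOrderOf_dvd_card (by simp [(addOrderOf_pos g).ne'])]
    simp [crossNum, mul_add, div_eq_mul_inv]

lemma IsZeroSumSeq.exists_isMinZeroSum_le {G0 : Set G} {S : Multiset G}
    (hS : IsZeroSumSeq G0 S) (hS0 : S ≠ 0) : ∃ A ≤ S, IsMinZeroSum G0 A := by
  induction S using Multiset.strongInductionOn with
  | _ S ih =>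
    by_cases hmin : ∀ T ≤ S, T ≠ 0 → T ≠ S → T.sum ≠ 0
    · exact ⟨S, le_rfl, hS0, hS, hmin⟩
    · push Not at hmin
      obtain ⟨T, hTS, hT0, hTS', hTsum⟩ := hmin
      obtain ⟨A, hAT, hA⟩ :=
        ih T (lt_of_le_of_ne hTS hTS') ⟨fun g hg => hS.1 g (mem_of_le hTS hg), hTsum⟩ hT0
      exact ⟨A, hAT.trans hTS, hA⟩

lemma WeaklyHF.exists_crossNum_eq_natCast {G0 : Set G} (hW : WeaklyHF G0) {S : Multiset G}
    (hS : IsZeroSumSeq G0 S) : ∃ m : ℕ, crossNum S = m := by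
  induction S using Multiset.strongInductionOn with
  | _ S ih =>
    rcases eq_or_ne S 0 with rfl | hS0
    · exact ⟨0, by simp [crossNum]⟩
    obtain ⟨A, hAS, hA⟩ := hS.exists_isMinZeroSum_le hS0
    obtain ⟨T, rfl⟩ := Multiset.le_iff_exists_add.mp hAS
    have hT : IsZeroSumSeq G0 T :=
      ⟨fun g hg => hS.1 g (mem_add.mpr (Or.inr hg)), by simpa [hA.2.1.2] using hS.2⟩
    obtain ⟨k, hk⟩ := hW A hA
    obtain ⟨l, hl⟩ := ih T (lt_add_of_pos_left T (pos_iff_ne_zero.mpr hA.1)) hT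
    exact ⟨k + l, by rw [crossNum_add, hk, hl]; push_cast; rfl⟩

end CrossNumber

lemma pow_factorization_sub_dvd_div {n d : ℕ} (p : ℕ) (hd : d ∣ n) :
    p ^ (n.factorization p - d.factorization p) ∣ n / d := by
  rw [← Finsupp.tsub_apply, ← Nat.factorization_div hd]
  exact Nat.ordProj_dvd _ _

lemma pow_factorization_dvd_div_mul_sub {n d d' a b : ℕ} (p : ℕ) (hn : n ≠ 0) (hd : d ∣ n)
    (hdd' : d.factorization p ≤ d'.factorization p) (hab : a ≡ b [MOD d.gcd d']) :
    (p : ℤ) ^ n.factorization p ∣ ((n / d : ℕ) : ℤ) * (b - a) := by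
  have hdn : d.factorization p ≤ n.factorization p :=
    (Nat.factorization_le_iff_dvd (ne_zero_of_dvd_ne_zero hn hd) hn).mpr hd p
  have hgcd : p ^ d.factorization p ∣ d.gcd d' :=
    Nat.dvd_gcd (Nat.ordProj_dvd d p) ((pow_dvd_pow p hdd').trans (Nat.ordProj_dvd d' p))
  rw [← pow_sub_mul_pow _ hdn]
  exact mul_dvd_mul (mod_cast pow_factorization_sub_dvd_div p hd)
    ((Int.natCast_dvd_natCast.mpr (by simpa using hgcd)).trans hab.dvd)

lemma exists_lt_dvd_mul_add {d a : ℕ} (hd : 0 < d) (ha : a.Coprime d) (b : ℕ) :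
    ∃ s < d, d ∣ s * a + b := by
  have : NeZero d := ⟨hd.ne'⟩
  refine ⟨(-(b : ZMod d) * (a : ZMod d)⁻¹).val, ZMod.val_lt _, ?_⟩
  rw [← ZMod.natCast_eq_zero_iff]
  push_cast
  rw [ZMod.natCast_val, ZMod.cast_id', id, mul_assoc, mul_comm _ (a : ZMod d),
    ZMod.coe_mul_inv_eq_one a ha]
  ring

section Cyclic

variable {G : Type*} [AddCommGroup G] [Fintype G]

lemma exists_coprime_nsmul_eq_of_forall_mem_zmultiples {e : G}
    (hgen : ∀ x, x ∈ AddSubgroup.zmultiples e) (g : G) :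
    ∃ u : ℕ, u.Coprime (addOrderOf g) ∧ (Fintype.card G / addOrderOf g * u) • e = g := by
  obtain ⟨k, rfl⟩ := (AddSubmonoid.mem_multiples_iff _ _).mp
    (mem_multiples_iff_mem_zmultiples.mpr (hgen g))
  have hn : 0 < Fintype.card G := Fintype.card_pos
  have hd : (Fintype.card G).gcd k ∣ Fintype.card G := Nat.gcd_dvd_left _ _
  rw [addOrderOf_nsmul, addOrderOf_eq_card_of_forall_mem_zmultiples hgen, Nat.card_eq_fintype_card,
    Nat.div_div_self hd hn.ne']
  refine ⟨k / (Fintype.card G).gcd k, ?_, ?_⟩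
  · rw [Nat.gcd_comm]
    exact Nat.coprime_div_gcd_div_gcd (Nat.gcd_pos_of_pos_right k hn)
  · rw [Nat.mul_div_cancel' (Nat.gcd_dvd_right _ _)]

variable {e : G} {u : G → ℕ}

lemma sum_eq_sum_map_nsmul_s8 (hu : ∀ g, (Fintype.card G / addOrderOf g * u g) • e = g)
    (S : Multiset G) :
    S.sum = (S.map fun g => Fintype.card G / addOrderOf g * u g).sum • e := by
  induction S using Multiset.induction_on with
  | empty => simp
  | cons g S ih => rw [sum_cons, ih, map_cons, sum_cons, add_nsmul, hu]

lemma crossNum_replicate_add_replicate (a b : G) (s : ℕ) :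
    crossNum (replicate (addOrderOf a / (addOrderOf a).gcd (addOrderOf b) * s) a +
      replicate (addOrderOf b / (addOrderOf a).gcd (addOrderOf b)) b) =
      (s + 1) / (addOrderOf a).gcd (addOrderOf b) := by
  have ha : (addOrderOf a : ℚ) ≠ 0 := by simp [(addOrderOf_pos a).ne']
  have hb : (addOrderOf b : ℚ) ≠ 0 := by simp [(addOrderOf_pos b).ne']
  have hd : ((addOrderOf a).gcd (addOrderOf b) : ℚ) ≠ 0 := by
    simp [(Nat.gcd_pos_of_pos_left _ (addOrderOf_pos a)).ne']
  rw [crossNum_add, crossNum_replicate, crossNum_replicate, Nat.cast_mul,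
    Nat.cast_div (Nat.gcd_dvd_left _ _) hd, Nat.cast_div (Nat.gcd_dvd_right _ _) hd]
  field_simp

lemma sum_replicate_add_replicate_eq_zero (he : addOrderOf e = Fintype.card G)
    (hu : ∀ g, (Fintype.card G / addOrderOf g * u g) • e = g) (a b : G) {s : ℕ}
    (hs : (addOrderOf a).gcd (addOrderOf b) ∣ s * u a + u b) :
    (replicate (addOrderOf a / (addOrderOf a).gcd (addOrderOf b) * s) a +
      replicate (addOrderOf b / (addOrderOf a).gcd (addOrderOf b)) b).sum = 0 := by
  set n := Fintype.card G
  set d := (addOrderOf a).gcd (addOrderOf b)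
  have ha : n / addOrderOf a * (addOrderOf a / d) = n / d :=
    Nat.div_mul_div addOrderOf_dvd_card (Nat.gcd_dvd_left _ _)
  have hb : n / addOrderOf b * (addOrderOf b / d) = n / d :=
    Nat.div_mul_div addOrderOf_dvd_card (Nat.gcd_dvd_right _ _)
  rw [sum_eq_sum_map_nsmul_s8 hu, ← addOrderOf_dvd_iff_nsmul_eq_zero, he]
  simp only [map_add, map_replicate, sum_add, sum_replicate, smul_eq_mul]
  obtain ⟨t, ht⟩ := hs
  calc n ∣ n / d * d * t := ⟨t, by rw [Nat.div_mul_cancel ((Nat.gcd_dvd_left _ _).trans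
          addOrderOf_dvd_card)]⟩
    _ = n / addOrderOf a * (addOrderOf a / d) * s * u a
        + n / addOrderOf b * (addOrderOf b / d) * u b := by rw [ha, hb, mul_assoc, ← ht]; ring
    _ = _ := by ring

lemma modEq_of_weaklyHF_pair (he : addOrderOf e = Fintype.card G)
    (hu : ∀ g, (Fintype.card G / addOrderOf g * u g) • e = g)
    (hcop : ∀ g, (u g).Coprime (addOrderOf g)) {a b : G} (hW : WeaklyHF ({a, b} : Set G)) :
    u a ≡ u b [MOD (addOrderOf a).gcd (addOrderOf b)] := by
  set d := (addOrderOf a).gcd (addOrderOf b)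
  have hd : 0 < d := Nat.gcd_pos_of_pos_left _ (addOrderOf_pos a)
  obtain ⟨s, hsd, hs⟩ :=
    exists_lt_dvd_mul_add hd ((hcop a).coprime_dvd_right (Nat.gcd_dvd_left _ _)) (u b)
  obtain ⟨m, hm⟩ := hW.exists_crossNum_eq_natCast
    ⟨fun g hg => by rcases mem_add.mp hg with hg | hg <;> simp [eq_of_mem_replicate hg],
      sum_replicate_add_replicate_eq_zero he hu a b hs⟩
  rw [crossNum_replicate_add_replicate, div_eq_iff (Nat.cast_ne_zero.mpr hd.ne')] at hm
  have hsm : s + 1 = m * d := by exact_mod_cast hm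
  have hsd' : s + 1 = d := by
    obtain _ | _ | m := m
    · simp at hsm
    · simpa using hsm
    · nlinarith
  rw [← ZMod.natCast_eq_natCast_iff]
  have h1 : ((s * u a + u b : ℕ) : ZMod d) = 0 := (ZMod.natCast_eq_zero_iff _ _).mpr hs
  have h2 : ((s + 1 : ℕ) : ZMod d) = 0 := by rw [hsd']; exact ZMod.natCast_self d
  push_cast at h1 h2
  linear_combination (u a : ZMod d) * h2 - h1

lemma pow_factorization_dvd_sum_card_div_addOrderOf (he : addOrderOf e = Fintype.card G)
    (hu : ∀ g, (Fintype.card G / addOrderOf g * u g) • e = g)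
    (hcop : ∀ g, (u g).Coprime (addOrderOf g)) {S : Multiset G} (hsum : S.sum = 0)
    (hS : ∀ a ∈ S, ∀ b ∈ S, u a ≡ u b [MOD (addOrderOf a).gcd (addOrderOf b)]) (p : ℕ) :
    p ^ (Fintype.card G).factorization p ∣
      (S.map fun g => Fintype.card G / addOrderOf g).sum := by
  set n := Fintype.card G
  rcases eq_or_ne S 0 with rfl | hS0
  · simp
  obtain ⟨g₀, hg₀, hmax⟩ := S.exists_max_image (fun g => (addOrderOf g).factorization p) hS0
  by_cases hpg₀ : p ∣ addOrderOf g₀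
  · set K := (S.map fun g => n / addOrderOf g).sum
    set M := (S.map fun g => n / addOrderOf g * u g).sum
    have hM : n ∣ M := by
      rw [← he, addOrderOf_dvd_iff_nsmul_eq_zero, ← sum_eq_sum_map_nsmul_s8 hu, hsum]
    have hMK : (M : ℤ) - u g₀ * K =
        (S.map fun g => ((n / addOrderOf g : ℕ) : ℤ) * (u g - u g₀)).sum := by
      simp only [M, K, Nat.cast_multiset_sum, map_map, Function.comp_def, Nat.cast_mul, mul_sub,
        sum_map_sub, sum_map_mul_right]
      ring
    have hdiff : (p : ℤ) ^ n.factorization p ∣ (M : ℤ) - u g₀ * K := by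
      rw [hMK]
      refine dvd_sum fun z hz => ?_
      obtain ⟨g, hg, rfl⟩ := mem_map.mp hz
      exact pow_factorization_dvd_div_mul_sub p Fintype.card_ne_zero addOrderOf_dvd_card
        (hmax g hg) (hS g hg g₀ hg₀).symm
    have hpM : (p : ℤ) ^ n.factorization p ∣ M := mod_cast (Nat.ordProj_dvd n p).trans hM
    have hpu : p.Coprime (u g₀) := Nat.Coprime.coprime_dvd_left hpg₀ (hcop g₀).symm
    refine (Nat.Coprime.pow_left _ hpu).dvd_of_dvd_mul_left ?_
    have := dvd_sub hpM hdiff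
    rw [sub_sub_cancel] at this
    exact_mod_cast this
  · refine dvd_sum fun z hz => ?_
    obtain ⟨g, hg, rfl⟩ := mem_map.mp hz
    have hg : (addOrderOf g).factorization p = 0 := by
      have := hmax g hg
      rw [Nat.factorization_eq_zero_of_not_dvd hpg₀] at this
      omega
    simpa [hg] using pow_factorization_sub_dvd_div p (addOrderOf_dvd_card (x := g))

lemma crossNum_eq_natCast_of_modEq (he : addOrderOf e = Fintype.card G)
    (hu : ∀ g, (Fintype.card G / addOrderOf g * u g) • e = g)
    (hcop : ∀ g, (u g).Coprime (addOrderOf g)) {S : Multiset G} (hsum : S.sum = 0)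
    (hS : ∀ a ∈ S, ∀ b ∈ S, u a ≡ u b [MOD (addOrderOf a).gcd (addOrderOf b)]) :
    ∃ m : ℕ, crossNum S = m := by
  have hn : Fintype.card G ≠ 0 := Fintype.card_ne_zero
  have hdvd : Fintype.card G ∣ (S.map fun g => Fintype.card G / addOrderOf g).sum :=
    (Nat.dvd_iff_prime_pow_dvd_dvd _ _).mpr fun p k hp hpk =>
      (pow_dvd_pow p ((hp.pow_dvd_iff_le_factorization hn).mp hpk)).trans
        (pow_factorization_dvd_sum_card_div_addOrderOf he hu hcop hsum hS p)
  obtain ⟨m, hm⟩ := hdvd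
  refine ⟨m, mul_left_cancel₀ (Nat.cast_ne_zero.mpr hn) ?_⟩
  rw [card_mul_crossNum, hm]
  push_cast
  rfl

end Cyclic

/-- If a subset `G0` of a finite cyclic group is not weakly
half-factorial, then it contains a two-element subset that is not weakly
half-factorial. -/
theorem stmt_8 {G : Type*} [AddCommGroup G] [Fintype G] (hcyc : IsAddCyclic G)
    (G0 : Set G) (h : ¬ WeaklyHF G0) :
    ∃ a b : G, a ∈ G0 ∧ b ∈ G0 ∧ a ≠ b ∧ ¬ WeaklyHF ({a, b} : Set G) := by
  obtain ⟨e, hgen⟩ := hcyc.exists_generator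
  have he : addOrderOf e = Fintype.card G := by
    rw [addOrderOf_eq_card_of_forall_mem_zmultiples hgen, Nat.card_eq_fintype_card]
  choose u hcop hu using exists_coprime_nsmul_eq_of_forall_mem_zmultiples hgen
  by_contra! hpairs
  obtain ⟨A, hA, hAnat⟩ : ∃ A, IsMinZeroSum G0 A ∧ ∀ m : ℕ, crossNum A ≠ m := by
    simpa [WeaklyHF] using h
  obtain ⟨m, hm⟩ := crossNum_eq_natCast_of_modEq he hu hcop hA.2.1.2 fun a ha b hb => by
    rcases eq_or_ne a b with rfl | hab
    · rfl
    exact modEq_of_weaklyHF_pair he hu hcop (hpairs a b (hA.2.1.1 a ha) (hA.2.1.1 b hb) hab)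
  exact hAnat m hm
end

section
/- Let G be a finite cyclic group of order n with generator e, let G0 ⊆ G contain e, and let x ∈ [1, n]. If min Δ(B(G0 ∪ {xe})) ≥ x, then min Δ(B(G0 ∪ {xe})) = min Δ(B(G0)). -/
open Multiset

/-!
Write `g = x • e`, `n = addOrderOf e`, and let `φ` replace every `g` in a sequence by `e ^ x`;
it preserves sums, so it maps factorizations over `G0 ∪ {g}` to factorizations over `G0`
of the same length. The point is that, when `min Δ(G0 ∪ {g}) ≥ x`, `φ` maps atoms to atoms.
Let `S` be an atom containing `g` with multiplicity `m`, and `φ(S) = A₁ ⋯ A_k` over `G0`.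
A subproduct of the `Aᵢ` whose number of `e`'s is divisible by `x` pulls back to a zero-sum
subsequence of `S`, so no proper nonempty one exists, and prefix sums modulo `x` give `k ≤ x`.
On the other hand `S · e ^ (m n)` factors both as `S · (e ^ n) ^ m` and as
`A₁ ⋯ A_k · (g e ^ (n - x)) ^ m`, of lengths `m + 1` and `m + k`, so `k ≥ 2` would produce a
distance in `[1, x - 1]`. Hence `k = 1`, the minimal distance of `G0 ∪ {g}` is a distance of
`G0`, and as `Δ(G0) ⊆ Δ(G0 ∪ {g})` the two minima agree.
-/

theorem List.exists_dvd_sum_map_take_drop {α : Type*} (f : α → ℕ) (l : List α) {x : ℕ}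
    (hx : 0 < x) :
    ∃ a k, 0 < k ∧ a + k ≤ x ∧ x ∣ (((l.drop a).take k).map f).sum := by
  let prefixMod : Fin (x + 1) → Fin x := fun i => ⟨((l.take i).map f).sum % x, Nat.mod_lt _ hx⟩
  obtain ⟨i, j, hij, hmod⟩ := Fintype.exists_ne_map_eq_of_card_lt prefixMod (by simp)
  have key : ∀ a b : Fin (x + 1), a < b → prefixMod a = prefixMod b →
      ∃ a k, 0 < k ∧ a + k ≤ x ∧ x ∣ (((l.drop a).take k).map f).sum := by
    intro a b hab hab'
    have hsplit : l.take b = l.take a ++ (l.drop a).take (b - a) := by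
      rw [← List.take_add, Nat.add_sub_cancel' hab.le]
    refine ⟨a, b - a, by omega, by omega, ?_⟩
    have hmodeq : ((l.take a).map f).sum ≡ ((l.take b).map f).sum [MOD x] :=
      congrArg Fin.val hab'
    rw [hsplit, List.map_append, List.sum_append] at hmodeq
    simpa using (Nat.modEq_iff_dvd' (Nat.le_add_right _ _)).mp hmodeq
  rcases lt_or_gt_of_ne hij with h | h
  · exact key i j h hmod
  · exact key j i h hmod.symm

theorem Multiset.exists_le_card_le_dvd_sum_map {α : Type*} (f : α → ℕ) (s : Multiset α) {x : ℕ}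
    (hx : 0 < x) (hs : x ≤ card s) :
    ∃ t ≤ s, t ≠ 0 ∧ card t ≤ x ∧ x ∣ (t.map f).sum := by
  obtain ⟨a, k, hk, hakx, hdvd⟩ := List.exists_dvd_sum_map_take_drop f s.toList hx
  let t : Multiset α := (s.toList.drop a).take k
  have hcard : card t = min k (card s - a) := by
    simp only [t, coe_card, List.length_take, List.length_drop, length_toList]
  refine ⟨t, ?_, ?_, by omega, by simpa [t] using hdvd⟩
  · conv_rhs => rw [← Multiset.coe_toList s]
    exact Multiset.coe_le.mpr ((List.take_sublist _ _).trans (List.drop_sublist _ _)).subperm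
  · rw [← Multiset.card_pos]
    omega

section ZeroSum

variable {G : Type*} [AddCommGroup G]

theorem IsMinZeroSum.mono {G0 G1 : Set G} (h : G0 ⊆ G1) {A : Multiset G}
    (hA : IsMinZeroSum G0 A) : IsMinZeroSum G1 A :=
  ⟨hA.1, ⟨fun g hg => h (hA.2.1.1 g hg), hA.2.1.2⟩, hA.2.2⟩

theorem IsMinZeroSum.restrict {G0 G1 : Set G} {A : Multiset G}
    (hA : IsMinZeroSum G1 A) (hmem : ∀ g ∈ A, g ∈ G0) : IsMinZeroSum G0 A :=
  ⟨hA.1, ⟨hmem, hA.2.1.2⟩, hA.2.2⟩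

theorem isZeroSumSeq_sum {G0 : Set G} {F : Multiset (Multiset G)}
    (hF : ∀ A ∈ F, IsMinZeroSum G0 A) : IsZeroSumSeq G0 F.sum := by
  refine ⟨fun g hg => ?_, ?_⟩
  · obtain ⟨A, hA, hgA⟩ := Multiset.mem_join.mp hg
    exact (hF A hA).2.1.1 g hgA
  · change F.join.sum = 0
    rw [Multiset.sum_join]
    exact Multiset.sum_eq_zero fun s hs => by
      obtain ⟨A, hA, rfl⟩ := Multiset.mem_map.mp hs
      exact (hF A hA).2.1.2

theorem exists_factorization {G0 : Set G} {B : Multiset G} (hB : IsZeroSumSeq G0 B) :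
    ∃ F : Multiset (Multiset G), (∀ A ∈ F, IsMinZeroSum G0 A) ∧ F.sum = B := by
  induction B using Multiset.strongInductionOn with
  | ih B ih =>
  by_cases hB0 : B = 0
  · exact ⟨0, by simp, by simp [hB0]⟩
  by_cases hmin : IsMinZeroSum G0 B
  · exact ⟨{B}, by simpa using hmin, by simp⟩
  obtain ⟨T, hTB, hT0, hTne, hTsum⟩ : ∃ T ≤ B, T ≠ 0 ∧ T ≠ B ∧ T.sum = 0 := by
    simpa [IsMinZeroSum, hB0, hB] using hmin
  obtain ⟨U, rfl⟩ := Multiset.le_iff_exists_add.mp hTB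
  have hU0 : U ≠ 0 := by rintro rfl; simp at hTne
  obtain ⟨F1, hF1, rfl⟩ := ih T (lt_add_of_pos_right T (pos_iff_ne_zero.mpr hU0))
    ⟨fun g hg => hB.1 g (Multiset.mem_add.mpr (.inl hg)), hTsum⟩
  obtain ⟨F2, hF2, rfl⟩ := ih U (lt_add_of_pos_left U (pos_iff_ne_zero.mpr hT0))
    ⟨fun g hg => hB.1 g (Multiset.mem_add.mpr (.inr hg)), by simpa [hTsum] using hB.2⟩
  exact ⟨F1 + F2, by simpa [or_imp, forall_and] using ⟨hF1, hF2⟩, Multiset.sum_add _ _⟩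

end ZeroSum

theorem exists_mem_deltaOf_le {L : Set ℕ} {a b : ℕ} (ha : a ∈ L) (hb : b ∈ L) (hab : a < b) :
    ∃ δ ∈ DeltaOf L, 0 < δ ∧ δ ≤ b - a := by
  let above : Set ℕ := {c | c ∈ L ∧ a < c}
  have hb' : b ∈ above := ⟨hb, hab⟩
  obtain ⟨hcL, hac⟩ : sInf above ∈ above := Nat.sInf_mem ⟨b, hb'⟩
  have hcb : sInf above ≤ b := Nat.sInf_le hb'
  refine ⟨sInf above - a, ?_, by omega, by omega⟩
  unfold DeltaOf
  refine ⟨a, ha, sInf above, hcL, hac, rfl, fun d hd had => ?_⟩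
  exact (Nat.sInf_le (show d ∈ above from ⟨hd, had.1⟩)).not_gt had.2

section Distances

variable {G : Type*} [AddCommGroup G] {G0 G1 : Set G}

theorem lengthSet_eq_of_subset (h : G0 ⊆ G1) {B : Multiset G} (hB : ∀ g ∈ B, g ∈ G0) :
    LengthSet G1 B = LengthSet G0 B := by
  ext k
  constructor
  · rintro ⟨F, rfl, hF, rfl⟩
    exact ⟨F, rfl, fun A hA => (hF A hA).restrict fun g hg =>
      hB g (Multiset.mem_join.mpr ⟨A, hA, hg⟩), rfl⟩
  · rintro ⟨F, rfl, hF, rfl⟩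
    exact ⟨F, rfl, fun A hA => (hF A hA).mono h, rfl⟩

theorem deltaB_mono (h : G0 ⊆ G1) : DeltaB G0 ⊆ DeltaB G1 := by
  simp only [DeltaB, Set.iUnion_subset_iff]
  intro B hB
  rw [← lengthSet_eq_of_subset h hB.1]
  exact Set.subset_biUnion_of_mem (u := fun B => DeltaOf (LengthSet G1 B))
    (show IsZeroSumSeq G1 B from ⟨fun g hg => h (hB.1 g hg), hB.2⟩)

theorem isZeroSumSeq_of_mem_lengthSet {B : Multiset G} {k : ℕ} (hk : k ∈ LengthSet G0 B) :
    IsZeroSumSeq G0 B := by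
  obtain ⟨F, -, hF, rfl⟩ := hk
  exact isZeroSumSeq_sum hF

theorem minDelta_eq_of_mem_deltaB (h : G0 ⊆ G1) (hmem : minDelta G1 ∈ DeltaB G0) :
    minDelta G1 = minDelta G0 :=
  le_antisymm (Nat.sInf_le (deltaB_mono h (Nat.sInf_mem ⟨_, hmem⟩))) (Nat.sInf_le hmem)

theorem lengthSet_subset_lengthSet_map (φ : Multiset G →+ Multiset G)
    (hφ : ∀ A, IsMinZeroSum G1 A → IsMinZeroSum G0 (φ A)) (B : Multiset G) :
    LengthSet G1 B ⊆ LengthSet G0 (φ B) := by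
  rintro k ⟨F, rfl, hF, rfl⟩
  refine ⟨F.map φ, Multiset.card_map _ _, ?_, (map_multiset_sum φ F).symm⟩
  simp only [Multiset.mem_map, forall_exists_index, and_imp, forall_apply_eq_imp_iff₂]
  exact fun A hA => hφ A (hF A hA)

theorem minDelta_eq_of_isMinZeroSum_map (h : G0 ⊆ G1) (φ : Multiset G →+ Multiset G)
    (hφ : ∀ A, IsMinZeroSum G1 A → IsMinZeroSum G0 (φ A)) (hne : (DeltaB G1).Nonempty) :
    minDelta G1 = minDelta G0 := by
  refine minDelta_eq_of_mem_deltaB h ?_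
  have hmin : minDelta G1 ∈ DeltaB G1 := Nat.sInf_mem hne
  obtain ⟨B, -, a, haL, b, hbL, hab, hba, -⟩ := Set.mem_iUnion₂.mp hmin
  have haL' := lengthSet_subset_lengthSet_map φ hφ B haL
  obtain ⟨δ, hδ, -, hδle⟩ :=
    exists_mem_deltaOf_le haL' (lengthSet_subset_lengthSet_map φ hφ B hbL) hab
  have hδG0 : δ ∈ DeltaB G0 :=
    Set.mem_iUnion₂.mpr ⟨φ B, isZeroSumSeq_of_mem_lengthSet haL', hδ⟩
  have : minDelta G1 ≤ δ := Nat.sInf_le (deltaB_mono h hδG0)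
  rwa [show minDelta G1 = δ by omega]

end Distances

section Substitute

variable {α : Type*} [DecidableEq α]

def substitute (g : α) (R : Multiset α) : Multiset α →+ Multiset α where
  toFun S := S.filter (· ≠ g) + S.count g • R
  map_zero' := by simp
  map_add' S T := by
    simp only [Multiset.filter_add, Multiset.count_add, add_nsmul]
    abel

theorem substitute_apply (g : α) (R S : Multiset α) :
    substitute g R S = S.filter (· ≠ g) + S.count g • R := rfl

theorem count_substitute (g b : α) (R S : Multiset α) :
    (substitute g R S).count b = (if b = g then 0 else S.count b) + S.count g * R.count b := by
  simp [substitute_apply, Multiset.count_filter, Multiset.count_nsmul, ite_not]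

theorem substitute_add_replicate_count (g : α) (R S : Multiset α) :
    substitute g R S + replicate (S.count g) g = S + S.count g • R := by
  rw [substitute_apply, add_right_comm, add_left_inj, ← Multiset.filter_eq']
  simpa using Multiset.filter_add_not (· ≠ g) S

theorem mem_of_mem_substitute {g b : α} {R S : Multiset α} (hb : b ∈ substitute g R S) :
    (b ∈ S ∧ b ≠ g) ∨ b ∈ R := by
  rcases Multiset.mem_add.mp hb with h | h
  · exact .inl (Multiset.mem_filter.mp h)
  · exact .inr (Multiset.mem_of_mem_nsmul h)

theorem substitute_ne_zero {g : α} {R S : Multiset α} (hR : R ≠ 0) (hS : S ≠ 0) :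
    substitute g R S ≠ 0 := by
  intro h
  have hcard := congrArg card (substitute_add_replicate_count g R S)
  simp only [h, zero_add, Multiset.card_replicate, Multiset.card_add, Multiset.card_nsmul] at hcard
  have := Multiset.card_pos.mpr hR
  have := Multiset.card_pos.mpr hS
  nlinarith

theorem sum_substitute {G : Type*} [AddCancelCommMonoid G] [DecidableEq G] {g : G} {R : Multiset G}
    (hR : R.sum = g) (S : Multiset G) : (substitute g R S).sum = S.sum := by
  have := congrArg Multiset.sum (substitute_add_replicate_count g R S)
  simp only [Multiset.sum_add, Multiset.sum_replicate, Multiset.sum_nsmul, hR] at this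
  exact add_right_cancel this

theorem exists_le_substitute_replicate_eq {g e : α} (hge : g ≠ e) {x : ℕ} {S D : Multiset α}
    (hD : D ≤ substitute g (replicate x e) S) (hdvd : x ∣ D.count e) :
    ∃ D' ≤ S, substitute g (replicate x e) D' = D := by
  have hcount (b : α) := Multiset.count_le_of_le b hD
  simp only [count_substitute, Multiset.count_replicate] at hcount
  have hDg : D.count g = 0 := by
    have := hcount g
    simp only [if_pos, if_neg hge.symm] at this
    omega
  have hDe : D.count e ≤ S.count e + S.count g * x := by simpa [hge.symm] using hcount e
  -- `i` copies of `g` account for `i * x` of the `e`'s in `D`; the others must already be in `S`.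
  obtain ⟨i, hig, hix, hie⟩ :
      ∃ i ≤ S.count g, i * x ≤ D.count e ∧ D.count e - i * x ≤ S.count e := by
    by_cases h : D.count e / x ≤ S.count g
    · refine ⟨D.count e / x, h, (Nat.div_mul_cancel hdvd).le, ?_⟩
      rw [Nat.div_mul_cancel hdvd, Nat.sub_self]
      exact Nat.zero_le _
    · refine ⟨S.count g, le_rfl, ?_, by omega⟩
      exact (Nat.mul_le_mul_right x (not_le.mp h).le).trans (Nat.div_mul_le_self _ _)
  refine ⟨D.filter (· ≠ e) + replicate (D.count e - i * x) e + replicate i g, ?_, ?_⟩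
  · refine Multiset.le_iff_count.mpr fun b => ?_
    by_cases hbg : b = g
    · simpa [hbg, Multiset.count_replicate, hge, hge.symm, hDg] using hig
    by_cases hbe : b = e
    · simp only [hbe, Multiset.count_add, Multiset.count_filter, Multiset.count_replicate,
        if_pos, if_neg hge, ne_eq, not_true_eq_false, if_false]
      omega
    · simpa [Multiset.count_filter, Multiset.count_replicate, hbg, hbe, Ne.symm hbg, Ne.symm hbe]
        using hcount b
  · ext b
    by_cases hbg : b = g
    · simp [hbg, count_substitute, Multiset.count_replicate, hge, hge.symm, hDg]
    by_cases hbe : b = e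
    · simp [hbe, count_substitute, Multiset.count_replicate, hge, hge.symm, hDg]
      omega
    · simp [count_substitute, Multiset.count_filter, Multiset.count_replicate, hbg, hbe,
        Ne.symm hbg, Ne.symm hbe]

end Substitute

section Atoms

variable {G : Type*} [AddCommGroup G] {G0 : Set G} {e : G}

theorem isMinZeroSum_replicate_addOrderOf_s10 (he : e ∈ G0) (hn : addOrderOf e ≠ 0) :
    IsMinZeroSum G0 (replicate (addOrderOf e) e) := by
  refine ⟨fun h => hn (by simpa using congrArg card h),
    ⟨fun g hg => Multiset.eq_of_mem_replicate hg ▸ he, by simp⟩, ?_⟩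
  intro T hT hT0 hTne
  obtain ⟨k, hk, rfl⟩ := Multiset.le_replicate_iff.mp hT
  have hk0 : k ≠ 0 := by rintro rfl; simp at hT0
  have hkn : k ≠ addOrderOf e := by rintro rfl; exact hTne rfl
  simpa using nsmul_ne_zero_of_lt_addOrderOf hk0 (by omega)

theorem isMinZeroSum_cons_replicate_s10 {x : ℕ} (he : e ∈ G0) (hg : x • e ∈ G0) (hx : 1 ≤ x)
    (hxn : x ≤ addOrderOf e) :
    IsMinZeroSum G0 (x • e ::ₘ replicate (addOrderOf e - x) e) := by
  refine ⟨Multiset.cons_ne_zero, ⟨?_, ?_⟩, ?_⟩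
  · intro b hb
    rcases Multiset.mem_cons.mp hb with rfl | hb
    · exact hg
    · exact Multiset.eq_of_mem_replicate hb ▸ he
  · rw [Multiset.sum_cons, Multiset.sum_replicate, ← add_nsmul, Nat.add_sub_cancel' hxn,
      addOrderOf_nsmul_eq_zero]
  intro T hT hT0 hTne
  by_cases hgT : x • e ∈ T
  · obtain ⟨T', rfl⟩ := Multiset.exists_cons_of_mem hgT
    obtain ⟨k, hk, rfl⟩ := Multiset.le_replicate_iff.mp ((Multiset.cons_le_cons_iff _).mp hT)
    have hkn : k ≠ addOrderOf e - x := by rintro rfl; exact hTne rfl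
    rw [Multiset.sum_cons, Multiset.sum_replicate, ← add_nsmul]
    exact nsmul_ne_zero_of_lt_addOrderOf (by omega) (by omega)
  · obtain ⟨k, hk, rfl⟩ := Multiset.le_replicate_iff.mp ((Multiset.le_cons_of_notMem hgT).mp hT)
    have hk0 : k ≠ 0 := by rintro rfl; simp at hT0
    simpa using nsmul_ne_zero_of_lt_addOrderOf hk0 (by omega)

end Atoms

section Transfer

variable {G : Type*} [AddCommGroup G] [DecidableEq G] {G0 G1 : Set G} {e : G} {x : ℕ}
  {S : Multiset G} {F : Multiset (Multiset G)}

theorem exists_mem_deltaB_le_card_sub_one (he : e ∈ G1) (hg : x • e ∈ G1) (hx : 1 ≤ x)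
    (hxn : x ≤ addOrderOf e) (hS : IsMinZeroSum G1 S) (hF : ∀ A ∈ F, IsMinZeroSum G1 A)
    (hFS : F.sum = substitute (x • e) (replicate x e) S) (hF2 : 2 ≤ card F) :
    ∃ δ ∈ DeltaB G1, 0 < δ ∧ δ ≤ card F - 1 := by
  set m := S.count (x • e)
  set n := addOrderOf e
  have hlen₁ : 1 + m ∈ LengthSet G1 (S + m • replicate n e) := by
    refine ⟨S ::ₘ replicate m (replicate n e), by simp [add_comm], ?_, by simp⟩
    intro A hA
    rcases Multiset.mem_cons.mp hA with rfl | hA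
    · exact hS
    · rw [Multiset.eq_of_mem_replicate hA]
      exact isMinZeroSum_replicate_addOrderOf_s10 he (by omega)
  have hlen₂ : card F + m ∈ LengthSet G1 (S + m • replicate n e) := by
    refine ⟨F + replicate m (x • e ::ₘ replicate (n - x) e), by simp, ?_, ?_⟩
    · intro A hA
      rcases Multiset.mem_add.mp hA with hA | hA
      · exact hF A hA
      · rw [Multiset.eq_of_mem_replicate hA]
        exact isMinZeroSum_cons_replicate_s10 he hg hx hxn
    · rw [Multiset.sum_add, hFS, Multiset.sum_replicate, ← Multiset.singleton_add, nsmul_add,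
        Multiset.nsmul_singleton, ← add_assoc, substitute_add_replicate_count, add_assoc,
        ← nsmul_add, ← Multiset.replicate_add, Nat.add_sub_cancel' hxn]
  obtain ⟨δ, hδ, hδ0, hδle⟩ := exists_mem_deltaOf_le hlen₁ hlen₂ (by omega)
  exact ⟨δ, Set.mem_iUnion₂.mpr ⟨_, isZeroSumSeq_of_mem_lengthSet hlen₁, hδ⟩, hδ0, by omega⟩

theorem eq_of_le_of_dvd_count_sum (hge : x • e ≠ e) (hS : IsMinZeroSum G1 S)
    (hF : ∀ A ∈ F, IsMinZeroSum G0 A) (hFS : F.sum = substitute (x • e) (replicate x e) S)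
    {F' : Multiset (Multiset G)} (hF' : F' ≤ F) (hF'0 : F' ≠ 0) (hdvd : x ∣ F'.sum.count e) :
    F' = F := by
  have hsum_ne_zero {K : Multiset (Multiset G)} (hK : K ≤ F) (hK0 : K ≠ 0) : K.sum ≠ 0 := by
    rw [Ne, Multiset.sum_eq_zero_iff]
    obtain ⟨A, hA⟩ := Multiset.exists_mem_of_ne_zero hK0
    exact fun h => (hF A (Multiset.mem_of_le hK hA)).1 (h A hA)
  obtain ⟨K, rfl⟩ := Multiset.le_iff_exists_add.mp hF'
  obtain ⟨D', hD'S, hD'⟩ := exists_le_substitute_replicate_eq hge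
    (hFS ▸ Multiset.sum_add F' K ▸ Multiset.le_add_right _ _) hdvd
  by_contra hK0
  replace hK0 : K ≠ 0 := by rintro rfl; exact hK0 (add_zero F').symm
  refine hS.2.2 D' hD'S ?_ ?_ ?_
  · rintro rfl
    exact hsum_ne_zero hF' hF'0 (by rw [← hD', AddMonoidHom.map_zero])
  · rintro rfl
    rw [Multiset.sum_add, ← hD', add_eq_left] at hFS
    exact hsum_ne_zero le_add_self hK0 hFS
  · rw [← sum_substitute (g := x • e) (R := replicate x e) (by simp) D', hD']
    exact (isZeroSumSeq_sum fun A hA => hF A (Multiset.mem_of_le hF' hA)).2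

theorem isMinZeroSum_substitute (he : e ∈ G0) (hg : x • e ∉ G0) (hx : 1 ≤ x)
    (hxn : x ≤ addOrderOf e) (hd : ∀ δ ∈ DeltaB (G0 ∪ {x • e}), x ≤ δ)
    (hS : IsMinZeroSum (G0 ∪ {x • e}) S) :
    IsMinZeroSum G0 (substitute (x • e) (replicate x e) S) := by
  have hge : x • e ≠ e := fun h => hg (by rwa [h])
  have hφS : IsZeroSumSeq G0 (substitute (x • e) (replicate x e) S) := by
    refine ⟨fun b hb => ?_, (sum_substitute (by simp) S).trans hS.2.1.2⟩
    rcases mem_of_mem_substitute hb with ⟨hbS, hbg⟩ | hb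
    · exact (hS.2.1.1 b hbS).resolve_right hbg
    · rwa [Multiset.eq_of_mem_replicate hb]
  obtain ⟨F, hF, hFS⟩ := exists_factorization hφS
  have hcard_le : card F ≤ x := by
    by_contra! hlt
    obtain ⟨t, htF, ht0, htx, hdvd⟩ :=
      Multiset.exists_le_card_le_dvd_sum_map (count e) F (by omega) hlt.le
    rw [← Multiset.coe_countAddMonoidHom, ← map_multiset_sum] at hdvd
    have htF' := eq_of_le_of_dvd_count_sum hge hS hF hFS htF ht0 hdvd
    subst htF'
    omega
  have hcard : card F = 1 := by
    have hF0 : card F ≠ 0 := by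
      rw [Ne, Multiset.card_eq_zero]
      rintro rfl
      have hR : replicate x e ≠ 0 := Multiset.card_pos.mp (by rw [Multiset.card_replicate]; omega)
      exact substitute_ne_zero hR hS.1 (by simpa using hFS.symm)
    by_contra h1
    obtain ⟨δ, hδ, hδ0, hδle⟩ := exists_mem_deltaB_le_card_sub_one (Set.mem_union_left _ he)
      (Set.mem_union_right G0 (Set.mem_singleton _)) hx hxn hS
      (fun A hA => (hF A hA).mono Set.subset_union_left) hFS (by omega)
    have := hd δ hδ
    omega
  obtain ⟨A, rfl⟩ := Multiset.card_eq_one.mp hcard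
  simpa [← hFS] using hF A (Multiset.mem_singleton_self A)

end Transfer

theorem stmt_10_general {G : Type*} [AddCommGroup G] (n : ℕ)
    (e : G) (he : addOrderOf e = n)
    (G0 : Set G) (heG : e ∈ G0)
    (x : ℕ) (hx1 : 1 ≤ x) (hxn : x ≤ n)
    (hge : x ≤ minDelta (G0 ∪ {x • e})) :
    minDelta (G0 ∪ {x • e}) = minDelta G0 := by
  classical
  by_cases hxG : x • e ∈ G0
  · rw [Set.union_singleton, Set.insert_eq_of_mem hxG]
  subst he
  have hd (δ : ℕ) (hδ : δ ∈ DeltaB (G0 ∪ {x • e})) : x ≤ δ := hge.trans (Nat.sInf_le hδ)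
  exact minDelta_eq_of_isMinZeroSum_map Set.subset_union_left
    (substitute (x • e) (replicate x e)) (fun _ => isMinZeroSum_substitute heG hxG hx1 hxn hd)
    (Nat.nonempty_of_pos_sInf (by unfold minDelta at hge; omega))

/-- If `e ∈ G0` is a generator and `x ∈ [1,n]` with
`min Δ(B(G0 ∪ {x•e})) ≥ x`, then `min Δ(B(G0 ∪ {x•e})) = min Δ(B(G0))`. -/
theorem stmt_10 {G : Type*} [AddCommGroup G] [Fintype G] (n : ℕ)
    (hcard : Fintype.card G = n) (e : G) (he : addOrderOf e = n)
    (G0 : Set G) (heG : e ∈ G0)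
    (x : ℕ) (hx1 : 1 ≤ x) (hxn : x ≤ n)
    (hge : x ≤ minDelta (G0 ∪ {x • e})) :
    minDelta (G0 ∪ {x • e}) = minDelta G0 :=
  stmt_10_general n e he G0 heG x hx1 hxn hge
end

section
/- Let G be a finite cyclic group of order n ≥ 5 with generator e, let g = ((n-c1)/c2)·e for positive integers c1, c2 such that (n-c1-c2)/(c1·c2) is an integer, and let A be a minimal zero-sum sequence over {e, g} ∪ D (where every element of D is a multiple d·e with d | n) containing some element of D, with v_g(A) = v < c2. Write A = g^v · F with F a sequence over ({e} ∪ D), and let f_e(A) = g^v · e^{σ_e(F)}. Then f_e(A) is a minimal zero-sum sequence if and only if σ_e(F) ≤ n. -/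
open Multiset

private lemma sum_nsmul_multiset {G : Type*} [AddCommMonoid G] (e : G) (L : Multiset ℕ) :
    L.sum • e = (L.map (fun k => k • e)).sum := by
  induction L using Multiset.induction with
  | empty => simp
  | cons a t ih => simp [add_nsmul, ih]


/-- With `g = ((n-c1)/c2)•e`, `D` a set of multiples `d•e` with
`d ∣ n`, and `A = g^v · F` a minimal zero-sum sequence over `{e,g} ∪ D`
containing an element of `D` with `v = v_g(A) < c2` and `F` over `{e} ∪ D`,
the sequence `f_e(A) = g^v · e^(σ_e(F))` is a minimal zero-sum sequence iff
`σ_e(F) ≤ n`. -/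
theorem stmt_11 {G : Type*} [AddCommGroup G] [Fintype G] (n : ℕ) (hn : 5 ≤ n)
    (hcard : Fintype.card G = n) (e : G) (he : addOrderOf e = n)
    (c1 c2 : ℕ) (hc1 : 0 < c1) (hc2 : 0 < c2) (hcn : c1 + c2 < n)
    (hint : c1 * c2 ∣ n - c1 - c2)
    (g : G) (hg : g = ((n - c1) / c2) • e)
    (D : Set G) (hD : ∀ h ∈ D, ∃ d : ℕ, d ∣ n ∧ h = d • e)
    (s : G → ℕ) (hs : ∀ h ∈ ({e, g} : Set G) ∪ D, s h ∈ Finset.Icc 1 n ∧ s h • e = h)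
    (A F : Multiset G) (v : ℕ) (hv : v < c2)
    (hAF : A = replicate v g + F) (hFmem : ∀ h ∈ F, h ∈ insert e D)
    (hA : IsMinZeroSum (({e, g} : Set G) ∪ D) A)
    (hsome : ∃ h ∈ F, h ∈ D) :
    IsMinZeroSum (({e, g} : Set G) ∪ D)
        (replicate v g + replicate ((F.map s).sum) e) ↔ (F.map s).sum ≤ n := by

  classical
  have hdvdc2 : c2 ∣ n - c1 := by
    obtain ⟨t, ht⟩ := (dvd_mul_left c2 c1).trans hint
    exact ⟨t + 1, by rw [Nat.mul_succ]; omega⟩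
  have hc2m : c2 * ((n - c1) / c2) = n - c1 := Nat.mul_div_cancel' hdvdc2
  set m := (n - c1) / c2 with hmdef
  set σ := (F.map s).sum with hσdef
  clear_value m σ
  clear hmdef
  have hc2m' : c2 * m + c1 = n := by omega
  have hm2 : 2 ≤ m := by
    by_contra hcon
    have h1 : c2 * m ≤ c2 * 1 := Nat.mul_le_mul le_rfl (by omega)
    omega
  have hmn : m < n := by
    have h1 : 1 * m ≤ c2 * m := Nat.mul_le_mul hc2 le_rfl
    omega
  have hek : ∀ k : ℕ, k • e = 0 ↔ n ∣ k := by
    intro k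
    rw [← he]
    exact Iff.symm addOrderOf_dvd_iff_nsmul_eq_zero
  have hne : e ≠ g := by
    intro hcon
    have hme : m • e = e := by rw [← hg, ← hcon]
    have h1 : (m - 1 + 1) • e = e := by rw [show m - 1 + 1 = m by omega, hme]
    rw [succ_nsmul] at h1
    have h2 : (m - 1) • e = 0 := by
      have := congrArg (fun x => x - e) h1
      simpa using this
    have h3 := Nat.le_of_dvd (by omega) ((hek _).mp h2)
    omega
  have hFsub : ∀ h ∈ F, h ∈ ({e, g} : Set G) ∪ D := by
    intro h hh
    rcases Set.mem_insert_iff.mp (hFmem h hh) with h1 | h1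
    · exact Or.inl (Or.inl h1)
    · exact Or.inr h1
  have hFsum : σ • e = F.sum := by
    rw [hσdef, sum_nsmul_multiset, Multiset.map_map]
    have hcg : F.map ((fun k : ℕ => k • e) ∘ s) = F := by
      conv_rhs => rw [← Multiset.map_id F]
      exact Multiset.map_congr rfl fun h hh => (hs h (hFsub h hh)).2
    rw [hcg]
  have hBsum : ∀ a b : ℕ, (Multiset.replicate a g + Multiset.replicate b e).sum
      = (a * m + b) • e := by
    intro a b
    rw [Multiset.sum_add, Multiset.sum_replicate, Multiset.sum_replicate, hg, add_nsmul,
      ← mul_nsmul]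
    ring_nf
  have hAsum0 : A.sum = 0 := hA.2.1.2
  have hkey : (v * m + σ) • e = 0 := by
    have h1 : (Multiset.replicate v g + Multiset.replicate σ e : Multiset G).sum = A.sum := by
      rw [hAF, Multiset.sum_add, Multiset.sum_add, Multiset.sum_replicate,
        Multiset.sum_replicate, hFsum]
    rw [← hBsum v σ, h1, hAsum0]
  have hdvd : n ∣ v * m + σ := (hek _).mp hkey
  have hσ1 : 1 ≤ σ := by
    obtain ⟨h, hhF, hhD⟩ := hsome
    have h1 := (hs h (Or.inr hhD)).1
    rw [Finset.mem_Icc] at h1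
    have h2 : s h ≤ σ := by
      rw [hσdef]
      exact Multiset.single_le_sum (fun x _ => Nat.zero_le x) _ (Multiset.mem_map_of_mem s hhF)
    omega
  have hvm : v * m + m ≤ c2 * m := by
    have h1 : (v + 1) * m ≤ c2 * m := Nat.mul_le_mul hv le_rfl
    nlinarith
  constructor
  · intro hmin
    by_contra hgt
    push_neg at hgt
    refine hmin.2.2 (Multiset.replicate n e) ?_ ?_ ?_ ?_
    · exact le_trans ((Multiset.replicate_le_replicate e).mpr (by omega))
        (Multiset.le_add_left _ _)
    · intro hEq
      have := congrArg Multiset.card hEq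
      simp only [Multiset.card_replicate, Multiset.card_zero] at this
      omega
    · intro hEq
      have := congrArg Multiset.card hEq
      simp only [Multiset.card_replicate, Multiset.card_add] at this
      omega
    · rw [Multiset.sum_replicate]
      exact (hek n).mpr dvd_rfl
  · intro hσn
    have hn1 : v * m + σ = n := by
      obtain ⟨t, ht⟩ := hdvd
      have h2 : v * m + σ < 2 * n := by omega
      rcases Nat.lt_or_ge t 2 with h | h
      · interval_cases t <;> omega
      · exfalso
        have : 2 * n ≤ n * t := by nlinarith
        omega
    refine ⟨?_, ⟨?_, ?_⟩, ?_⟩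
    · intro h0
      have := congrArg Multiset.card h0
      simp only [Multiset.card_add, Multiset.card_replicate, Multiset.card_zero] at this
      omega
    · intro x hx
      rcases Multiset.mem_add.mp hx with hx | hx
      · rw [Multiset.eq_of_mem_replicate hx]
        exact Or.inl (Or.inr rfl)
      · rw [Multiset.eq_of_mem_replicate hx]
        exact Or.inl (Or.inl rfl)
    · rw [hBsum, hn1]
      exact (hek n).mpr dvd_rfl
    · intro T hTle hT0 hTB hTsum
      set a := T.count g with hadef
      set b := T.count e with hbdef
      clear_value a b
      have hcount := fun x => Multiset.count_le_of_le x hTle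
      have hcg : Multiset.count g (Multiset.replicate v g + Multiset.replicate σ e) = v := by
        simp [Multiset.count_replicate, hne, Ne.symm hne]
      have hce : Multiset.count e (Multiset.replicate v g + Multiset.replicate σ e) = σ := by
        simp [Multiset.count_replicate, hne, Ne.symm hne]
      have ha : a ≤ v := by rw [hadef]; exact le_trans (hcount g) (le_of_eq hcg)
      have hb : b ≤ σ := by rw [hbdef]; exact le_trans (hcount e) (le_of_eq hce)
      have hTeq : T = Multiset.replicate a g + Multiset.replicate b e := by
        ext x
        by_cases hxg : x = g
        · subst hxg
          simp [Multiset.count_replicate, hne, Ne.symm hne, hadef]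
        · by_cases hxe : x = e
          · subst hxe
            simp [Multiset.count_replicate, hne, Ne.symm hne, hbdef]
          · have h1 : Multiset.count x (Multiset.replicate v g + Multiset.replicate σ e) = 0 := by
              simp [Multiset.count_replicate, hxg, hxe, Ne.symm hxg, Ne.symm hxe]
            have h2 := hcount x
            rw [h1] at h2
            simp [Multiset.count_replicate, hxg, hxe, Ne.symm hxg, Ne.symm hxe,
              Nat.le_zero.mp h2]
      clear hadef hbdef hcg hce hcount hTle
      rw [hTeq, hBsum] at hTsum
      have hd2 : n ∣ a * m + b := (hek _).mp hTsum
      have ham : a * m ≤ v * m := Nat.mul_le_mul ha le_rfl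
      have hpos : a * m + b ≠ 0 := by
        intro h0
        have ham0 : a * m = 0 := Nat.eq_zero_of_add_eq_zero_right h0
        have ha0 : a = 0 := by
          rcases Nat.mul_eq_zero.mp ham0 with h | h <;> omega
        have hb0 : b = 0 := Nat.eq_zero_of_add_eq_zero_left h0
        apply hT0
        rw [hTeq, ha0, hb0]
        simp
      have hle2 : a * m + b ≤ n := by
        calc a * m + b ≤ v * m + σ := Nat.add_le_add ham hb
          _ = n := hn1
      have heqn : a * m + b = n :=
        Nat.le_antisymm hle2 (Nat.le_of_dvd (Nat.pos_of_ne_zero hpos) hd2)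
      have heq2 : a * m + b = v * m + σ := by rw [heqn, hn1]
      have hbσ : b = σ := by
        have h1 : v * m + σ ≤ v * m + b := by
          calc v * m + σ = a * m + b := heq2.symm
            _ ≤ v * m + b := Nat.add_le_add ham le_rfl
        exact Nat.le_antisymm hb (Nat.le_of_add_le_add_left h1)
      have hamv : a * m = v * m := by
        have := heq2
        rw [hbσ] at this
        exact Nat.add_right_cancel this
      have hav : a = v := Nat.eq_of_mul_eq_mul_right (by omega) hamv
      exact hTB (by rw [hTeq, hav, hbσ])
end

section
/- Let G be a finite cyclic group of order n with generator f, and suppose 8 divides n - 6 (so (n-6)/8 is a natural number). Then the minimal distance of the set {f, 2f, (n/2)f, -4f} satisfies min Δ(B({f, 2f, (n/2)f, -4f})) = (n-6)/8. -/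
open Multiset

/-!
Write `n = 8k + 6`, so that the set is `G₀ = {f, 2f, (4k+3)f, (8k+2)f}`, and lift every element
of `G₀` to its discrete logarithm `1, 2, 4k+3` or `8k+2` in `ℕ`. The lifted sum of a zero-sum
sequence is a multiple `n m` of `n`. For a minimal zero-sum sequence, a case analysis on the short
zero-sum subsequences it might contain shows `m ≡ 1 (mod k)`. Adding this up over a factorization
of length `ℓ` gives a lifted sum `n (ℓ + k J)`, so all factorization lengths of a sequence are
congruent modulo `k` and every distance is a positive multiple of `k`; for `k = 0` this makes `G₀`
half-factorial, and `min ∅ = 0`. Conversely, `U V = W X Yᵏ` for the minimal zero-sum sequences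
`U = f ((4k+3)f) ((8k+2)f)^(k+1)`, `V = f (2f)^(2k+1) ((4k+3)f)`, `W = ((4k+3)f)²`,
`X = f² (2f) ((8k+2)f)` and `Y = (2f)² ((8k+2)f)`, so `U V` has the lengths `2` and `k + 2`.
-/

namespace Multiset

variable {α : Type*}

theorem exists_eq_add_of_le_add {s t u : Multiset α} (h : u ≤ s + t) :
    ∃ v ≤ s, ∃ w ≤ t, u = v + w := by
  classical
  refine ⟨u ∩ s, inter_le_right, u - u ∩ s, ?_, (add_tsub_cancel_of_le inter_le_left).symm⟩
  rw [le_iff_count] at h ⊢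
  intro x
  specialize h x
  simp only [count_sub, count_inter, count_add] at h ⊢
  omega

theorem exists_eq_replicate_add_four {x₁ x₂ x₃ x₄ : α} {s : Multiset α}
    (hs : ∀ x ∈ s, x = x₁ ∨ x = x₂ ∨ x = x₃ ∨ x = x₄) :
    ∃ a b c d, s = replicate a x₁ + replicate b x₂ + replicate c x₃ + replicate d x₄ := by
  induction s using Multiset.induction with
  | empty => exact ⟨0, 0, 0, 0, by simp⟩
  | cons x s ih =>
    obtain ⟨a, b, c, d, rfl⟩ := ih fun y hy => hs y (mem_cons_of_mem hy)
    rcases hs x (mem_cons_self x _) with rfl | rfl | rfl | rfl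
    · exact ⟨a + 1, b, c, d, by simp [replicate_succ]⟩
    · exact ⟨a, b + 1, c, d, by simp [replicate_succ]⟩
    · exact ⟨a, b, c + 1, d, by simp [replicate_succ]⟩
    · exact ⟨a, b, c, d + 1, by simp [replicate_succ]⟩

theorem exists_eq_replicate_add_four_of_le {x₁ x₂ x₃ x₄ : α} {a b c d : ℕ} {t : Multiset α}
    (h : t ≤ replicate a x₁ + replicate b x₂ + replicate c x₃ + replicate d x₄) :
    ∃ a' ≤ a, ∃ b' ≤ b, ∃ c' ≤ c, ∃ d' ≤ d,
      t = replicate a' x₁ + replicate b' x₂ + replicate c' x₃ + replicate d' x₄ := by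
  obtain ⟨t₁₂₃, h₁₂₃, t₄, h₄, rfl⟩ := exists_eq_add_of_le_add h
  obtain ⟨t₁₂, h₁₂, t₃, h₃, rfl⟩ := exists_eq_add_of_le_add h₁₂₃
  obtain ⟨t₁, h₁, t₂, h₂, rfl⟩ := exists_eq_add_of_le_add h₁₂
  obtain ⟨a', ha, rfl⟩ := le_replicate_iff.1 h₁
  obtain ⟨b', hb, rfl⟩ := le_replicate_iff.1 h₂
  obtain ⟨c', hc, rfl⟩ := le_replicate_iff.1 h₃
  obtain ⟨d', hd, rfl⟩ := le_replicate_iff.1 h₄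
  exact ⟨a', ha, b', hb, c', hc, d', hd, rfl⟩

end Multiset

/-- The lifted sum of `f^a (2f)^b ((4k+3)f)^c ((8k+2)f)^d`; for `n = 8k + 6`, the integers
`4k + 3` and `8k + 2` represent `n / 2` and `-4` modulo `n`. -/
def weight (k a b c d : ℕ) : ℕ := a + 2 * b + (4 * k + 3) * c + (8 * k + 2) * d

/-- Minimality of the zero-sum sequence `f^a (2f)^b ((4k+3)f)^c ((8k+2)f)^d`, in terms of the
multiplicities (see `isMinZeroSum_ofCounts_iff`). -/
def IsAtomCounts (k a b c d : ℕ) : Prop :=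
  0 < a + b + c + d ∧ 8 * k + 6 ∣ weight k a b c d ∧
    ∀ a' ≤ a, ∀ b' ≤ b, ∀ c' ≤ c, ∀ d' ≤ d, 0 < a' + b' + c' + d' →
      a' + b' + c' + d' < a + b + c + d → ¬ 8 * k + 6 ∣ weight k a' b' c' d'

theorem le_weight (k a b c d : ℕ) : a + b + c + d ≤ weight k a b c d := by
  unfold weight; ring_nf; omega

theorem weight_lt_weight {k a b c d a' b' c' d' : ℕ} (hb : b' ≤ b) (hc : c' ≤ c)
    (hd : d' ≤ d) (hlt : a' + b' + c' + d' < a + b + c + d) :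
    weight k a' b' c' d' < weight k a b c d := by
  have := Nat.mul_le_mul_left k hc
  have := Nat.mul_le_mul_left k hd
  unfold weight; ring_nf; omega

theorem exists_weight_eq_of_dvd_of_bounds {k a b c d : ℕ} (hpos : 0 < a + b + c + d)
    (hdvd : 8 * k + 6 ∣ weight k a b c d) (hc : c ≤ 1) (hd : d ≤ 4 * k + 2)
    (hd4 : 1 ≤ d → a + 2 * b ≤ 3) (hdk : c = 1 → 1 ≤ a → d ≤ k)
    (hs : a + 2 * b < 8 * k + 6) :
    ∃ j, weight k a b c d = (8 * k + 6) * (1 + k * j) := by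
  obtain rfl | ⟨t, rfl⟩ : d = 0 ∨ ∃ t, d = t + 1 := by cases d <;> simp
  · have hw : 0 < weight k a b c 0 ∧ weight k a b c 0 < 2 * (8 * k + 6) := by
      unfold weight; interval_cases c <;> omega
    refine ⟨0, ?_⟩
    rw [Nat.eq_of_dvd_of_lt_two_mul hw.1.ne' hdvd hw.2]
    ring
  have hs3 := hd4 (by omega)
  obtain ⟨m, hm⟩ := hdvd
  unfold weight at hm ⊢
  interval_cases c
  · -- the weight is `n (t + 1) - x` with `x = 4 (t + 1) - a - 2 b ∈ (0, 2n)`, so `x = n`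
    have h1 : m < t + 1 := Nat.lt_of_mul_lt_mul_left (a := 8 * k + 6) (by
      rw [← hm]; ring_nf; omega)
    have h2 : t < m + 1 := Nat.lt_of_mul_lt_mul_left (a := 8 * k + 6) (by
      rw [mul_add, ← hm]; ring_nf; omega)
    obtain rfl : m = t := by omega
    ring_nf at hm
    obtain rfl : m = 2 * k + 1 := by omega
    exact ⟨2, by ring_nf; omega⟩
  · -- the weight is even, so `a` is odd and `d ≤ k`; then it lies strictly between `n d` and
    -- `n (d + 1)`
    have ht : t + 1 ≤ k := hdk rfl (by ring_nf at hm; omega)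
    have h1 : t + 1 < m := Nat.lt_of_mul_lt_mul_left (a := 8 * k + 6) (by
      rw [← hm]; ring_nf; omega)
    have h2 : m < t + 2 := Nat.lt_of_mul_lt_mul_left (a := 8 * k + 6) (by
      rw [← hm]; ring_nf; omega)
    omega

namespace IsAtomCounts

variable {k a b c d : ℕ}

theorem weight_eq_of_le (h : IsAtomCounts k a b c d) {a' b' c' d' j : ℕ} (ha : a' ≤ a)
    (hb : b' ≤ b) (hc : c' ≤ c) (hd : d' ≤ d) (hpos : 0 < a' + b' + c' + d')
    (hw : weight k a' b' c' d' = (8 * k + 6) * (1 + k * j)) :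
    weight k a b c d = (8 * k + 6) * (1 + k * j) := by
  have htot : a' + b' + c' + d' = a + b + c + d := by
    by_contra hne
    exact h.2.2 a' ha b' hb c' hc d' hd hpos (by omega) ⟨_, hw⟩
  obtain ⟨rfl, rfl, rfl, rfl⟩ : a' = a ∧ b' = b ∧ c' = c ∧ d' = d := by omega
  exact hw

/-- Each case exhibits a zero-sum subsequence, which by minimality is the whole sequence:
`((4k+3)f)²`, `f^i (2f)^j` with `i + 2j = n`, `((8k+2)f)^(4k+3)`, `f^i (2f)^j ((8k+2)f)` with
`i + 2j = 4`, and `f ((4k+3)f) ((8k+2)f)^(k+1)`. -/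
theorem exists_weight_eq (h : IsAtomCounts k a b c d) :
    ∃ j, weight k a b c d = (8 * k + 6) * (1 + k * j) := by
  by_cases hc : 2 ≤ c
  · exact ⟨0, h.weight_eq_of_le (Nat.zero_le a) (Nat.zero_le b) hc (Nat.zero_le d) (by omega)
      (by unfold weight; ring)⟩
  by_cases hs : 8 * k + 6 ≤ a + 2 * b
  · exact ⟨0, h.weight_eq_of_le (a' := 8 * k + 6 - 2 * min b (4 * k + 3)) (by omega)
      (min_le_left b (4 * k + 3)) (Nat.zero_le c) (Nat.zero_le d) (by omega)
      (by simp [weight]; omega)⟩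
  by_cases hd : 4 * k + 3 ≤ d
  · exact ⟨4, h.weight_eq_of_le (Nat.zero_le a) (Nat.zero_le b) (Nat.zero_le c) hd (by omega)
      (by unfold weight; ring)⟩
  by_cases h4 : 1 ≤ d ∧ 4 ≤ a + 2 * b
  · exact ⟨0, h.weight_eq_of_le (a' := 4 - 2 * min b 2) (by omega) (min_le_left b 2)
      (Nat.zero_le c) h4.1 (by omega) (by simp [weight]; omega)⟩
  by_cases h5 : c = 1 ∧ 1 ≤ a ∧ k + 1 ≤ d
  · exact ⟨1, h.weight_eq_of_le h5.2.1 (Nat.zero_le b) h5.1.ge h5.2.2 (by omega)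
      (by unfold weight; ring)⟩
  exact exists_weight_eq_of_dvd_of_bounds h.1 h.2.1 (by omega) (by omega) (fun _ => by omega)
    (fun _ _ => by omega) (by omega)

end IsAtomCounts

theorem isAtomCounts_of_weight_eq {k a b c d : ℕ} (hpos : 0 < a + b + c + d)
    (hw : weight k a b c d = 8 * k + 6) : IsAtomCounts k a b c d :=
  ⟨hpos, hw ▸ dvd_rfl, fun _ _ _ hb _ hc _ hd hpos' hlt => Nat.not_dvd_of_pos_of_lt
    (hpos'.trans_le (le_weight ..)) (hw ▸ weight_lt_weight hb hc hd hlt)⟩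

theorem isAtomCounts_one_zero_one_succ (k : ℕ) : IsAtomCounts k 1 0 1 (k + 1) := by
  refine ⟨by omega, ⟨k + 1, by unfold weight; ring⟩, ?_⟩
  rintro a' ha b' hb c' hc d' hd hpos hlt ⟨m, hm⟩
  unfold weight at hm
  have hmd : m < d' + 1 := Nat.lt_of_mul_lt_mul_left (a := 8 * k + 6) <| by
    rw [← hm]; interval_cases c' <;> ring_nf <;> omega
  obtain ⟨r, rfl⟩ := Nat.exists_eq_add_of_le (Nat.lt_add_one_iff.1 hmd)
  interval_cases c' <;> rcases r with _ | r <;> ring_nf at hm <;> omega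

section Dlog

variable {G : Type*} [AddMonoid G]

noncomputable def dlog (f : G) : G → ℕ :=
  Function.invFunOn (· • f) (Set.Iio (addOrderOf f))

theorem dlog_nsmul {f : G} {j : ℕ} (hj : j < addOrderOf f) : dlog f (j • f) = j :=
  nsmul_injOn_Iio_addOrderOf.leftInvOn_invFunOn hj

end Dlog

section Distances

variable {G : Type*} [AddCommGroup G] {k : ℕ} {f : G}

def G0 (k : ℕ) (f : G) : Set G := {f, 2 • f, (4 * k + 3) • f, (8 * k + 2) • f}

/-- When `k = 0` we have `2f = (8k+2)f`, so the multiplicities are not determined by the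
sequence; the arguments below never need them to be. -/
def ofCounts (k : ℕ) (f : G) (a b c d : ℕ) : Multiset G :=
  replicate a f + replicate b (2 • f) + replicate c ((4 * k + 3) • f) +
    replicate d ((8 * k + 2) • f)

theorem card_ofCounts (a b c d : ℕ) : card (ofCounts k f a b c d) = a + b + c + d := by
  simp [ofCounts]

theorem ofCounts_ne_zero_iff {a b c d : ℕ} :
    ofCounts k f a b c d ≠ 0 ↔ 0 < a + b + c + d := by
  rw [← card_pos, card_ofCounts]

theorem sum_ofCounts (a b c d : ℕ) : (ofCounts k f a b c d).sum = weight k a b c d • f := by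
  simp only [ofCounts, weight, sum_add, sum_replicate, smul_smul, ← add_nsmul]
  ring_nf

theorem sum_ofCounts_eq_zero_iff (hf : addOrderOf f = 8 * k + 6) {a b c d : ℕ} :
    (ofCounts k f a b c d).sum = 0 ↔ 8 * k + 6 ∣ weight k a b c d := by
  rw [sum_ofCounts, ← addOrderOf_dvd_iff_nsmul_eq_zero, hf]

theorem sum_map_dlog_ofCounts (hf : addOrderOf f = 8 * k + 6) (a b c d : ℕ) :
    ((ofCounts k f a b c d).map (dlog f)).sum = weight k a b c d := by
  have h1 : dlog f f = 1 := by simpa using dlog_nsmul (f := f) (j := 1) (by omega)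
  have h2 : dlog f (2 • f) = 2 := dlog_nsmul (by omega)
  have h3 : dlog f ((4 * k + 3) • f) = 4 * k + 3 := dlog_nsmul (by omega)
  have h4 : dlog f ((8 * k + 2) • f) = 8 * k + 2 := dlog_nsmul (by omega)
  simp only [ofCounts, weight, map_add, map_replicate, sum_add, sum_replicate, h1, h2, h3, h4,
    smul_eq_mul]
  ring

theorem ofCounts_add (a b c d a' b' c' d' : ℕ) :
    ofCounts k f (a + a') (b + b') (c + c') (d + d') =
      ofCounts k f a b c d + ofCounts k f a' b' c' d' := by
  simp only [ofCounts, replicate_add]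
  abel

theorem nsmul_ofCounts (m a b c d : ℕ) :
    m • ofCounts k f a b c d = ofCounts k f (m * a) (m * b) (m * c) (m * d) := by
  simp [ofCounts, nsmul_replicate]

theorem ofCounts_le_ofCounts {a b c d a' b' c' d' : ℕ} (ha : a' ≤ a) (hb : b' ≤ b)
    (hc : c' ≤ c) (hd : d' ≤ d) : ofCounts k f a' b' c' d' ≤ ofCounts k f a b c d := by
  unfold ofCounts
  gcongr

theorem mem_G0_of_mem_ofCounts {a b c d : ℕ} {g : G} (hg : g ∈ ofCounts k f a b c d) :
    g ∈ G0 k f := by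
  simp only [ofCounts, mem_add] at hg
  rcases hg with ((hg | hg) | hg) | hg <;> simp [G0, eq_of_mem_replicate hg]

theorem exists_eq_ofCounts {S : Multiset G} (hS : ∀ g ∈ S, g ∈ G0 k f) :
    ∃ a b c d, S = ofCounts k f a b c d :=
  exists_eq_replicate_add_four hS

theorem exists_eq_ofCounts_of_le {a b c d : ℕ} {T : Multiset G}
    (h : T ≤ ofCounts k f a b c d) :
    ∃ a' ≤ a, ∃ b' ≤ b, ∃ c' ≤ c, ∃ d' ≤ d, T = ofCounts k f a' b' c' d' :=
  exists_eq_replicate_add_four_of_le h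

theorem isMinZeroSum_ofCounts_iff (hf : addOrderOf f = 8 * k + 6) {a b c d : ℕ} :
    IsMinZeroSum (G0 k f) (ofCounts k f a b c d) ↔ IsAtomCounts k a b c d := by
  constructor
  · rintro ⟨hne, ⟨-, hsum⟩, hmin⟩
    refine ⟨ofCounts_ne_zero_iff.1 hne, (sum_ofCounts_eq_zero_iff hf).1 hsum, ?_⟩
    intro a' ha b' hb c' hc d' hd hpos hlt hdvd
    refine hmin _ (ofCounts_le_ofCounts ha hb hc hd) (ofCounts_ne_zero_iff.2 hpos) ?_
      ((sum_ofCounts_eq_zero_iff hf).2 hdvd)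
    intro heq
    have := congrArg card heq
    simp only [card_ofCounts] at this
    omega
  · rintro ⟨hpos, hdvd, hmin⟩
    refine ⟨ofCounts_ne_zero_iff.2 hpos,
      ⟨fun _ => mem_G0_of_mem_ofCounts, (sum_ofCounts_eq_zero_iff hf).2 hdvd⟩, ?_⟩
    intro T hT hne hneq hsum
    obtain ⟨a', ha, b', hb, c', hc, d', hd, rfl⟩ := exists_eq_ofCounts_of_le hT
    have hlt := card_lt_card (lt_of_le_of_ne hT hneq)
    simp only [card_ofCounts] at hlt
    exact hmin a' ha b' hb c' hc d' hd (ofCounts_ne_zero_iff.1 hne) hlt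
      ((sum_ofCounts_eq_zero_iff hf).1 hsum)

theorem IsMinZeroSum.exists_sum_map_dlog_eq (hf : addOrderOf f = 8 * k + 6) {A : Multiset G}
    (hA : IsMinZeroSum (G0 k f) A) :
    ∃ j, (A.map (dlog f)).sum = (8 * k + 6) * (1 + k * j) := by
  obtain ⟨a, b, c, d, rfl⟩ := exists_eq_ofCounts hA.2.1.1
  rw [sum_map_dlog_ofCounts hf]
  exact ((isMinZeroSum_ofCounts_iff hf).1 hA).exists_weight_eq

theorem exists_sum_map_dlog_sum_eq (hf : addOrderOf f = 8 * k + 6)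
    {F : Multiset (Multiset G)} (hF : ∀ A ∈ F, IsMinZeroSum (G0 k f) A) :
    ∃ J, (F.sum.map (dlog f)).sum = (8 * k + 6) * (card F + k * J) := by
  induction F using Multiset.induction with
  | empty => exact ⟨0, by simp⟩
  | cons A F ih =>
    obtain ⟨J, hJ⟩ := ih fun B hB => hF B (mem_cons_of_mem hB)
    obtain ⟨j, hj⟩ := (hF A (mem_cons_self A F)).exists_sum_map_dlog_eq hf
    exact ⟨j + J, by rw [sum_cons, map_add, sum_add, hj, hJ, card_cons]; ring⟩

theorem modEq_of_mem_lengthSet_s13 (hf : addOrderOf f = 8 * k + 6) {B : Multiset G} {l₁ l₂ : ℕ}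
    (h₁ : l₁ ∈ LengthSet (G0 k f) B) (h₂ : l₂ ∈ LengthSet (G0 k f) B) :
    l₁ ≡ l₂ [MOD k] := by
  obtain ⟨F₁, rfl, hF₁, rfl⟩ := h₁
  obtain ⟨F₂, rfl, hF₂, hB⟩ := h₂
  obtain ⟨J₁, hJ₁⟩ := exists_sum_map_dlog_sum_eq hf hF₁
  obtain ⟨J₂, hJ₂⟩ := exists_sum_map_dlog_sum_eq hf hF₂
  rw [hB, hJ₁] at hJ₂
  have hJ : card F₁ + k * J₁ = card F₂ + k * J₂ :=
    Nat.eq_of_mul_eq_mul_left (by omega) hJ₂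
  calc card F₁ ≡ card F₁ + k * J₁ [MOD k] := (Nat.add_mul_mod_self_left _ _ _).symm
    _ = card F₂ + k * J₂ := hJ
    _ ≡ card F₂ [MOD k] := Nat.add_mul_mod_self_left _ _ _

theorem pos_and_dvd_of_mem_deltaB (hf : addOrderOf f = 8 * k + 6) {d : ℕ}
    (hd : d ∈ DeltaB (G0 k f)) : 0 < d ∧ k ∣ d := by
  simp only [DeltaB, Set.mem_iUnion] at hd
  obtain ⟨B, -, l₁, h₁, l₂, h₂, hlt, rfl, -⟩ := hd
  exact ⟨by omega, (Nat.modEq_iff_dvd' hlt.le).1 (modEq_of_mem_lengthSet_s13 hf h₁ h₂)⟩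

theorem self_mem_deltaB (hf : addOrderOf f = 8 * k + 6) (hk : 0 < k) : k ∈ DeltaB (G0 k f) := by
  have atom {a b c d : ℕ} (h : IsAtomCounts k a b c d) :
      IsMinZeroSum (G0 k f) (ofCounts k f a b c d) :=
    (isMinZeroSum_ofCounts_iff hf).2 h
  have atom_of_weight_eq {a b c d : ℕ} (hpos : 0 < a + b + c + d)
      (hw : weight k a b c d = 8 * k + 6) : IsMinZeroSum (G0 k f) (ofCounts k f a b c d) :=
    atom (isAtomCounts_of_weight_eq hpos hw)
  set U := ofCounts k f 1 0 1 (k + 1)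
  set V := ofCounts k f 1 (2 * k + 1) 1 0
  set W := ofCounts k f 0 0 2 0
  set X := ofCounts k f 2 1 0 1
  set Y := ofCounts k f 0 2 0 1
  have hU : IsMinZeroSum (G0 k f) U := atom (isAtomCounts_one_zero_one_succ k)
  have hV : IsMinZeroSum (G0 k f) V := atom_of_weight_eq (by omega) (by unfold weight; ring)
  have hW : IsMinZeroSum (G0 k f) W := atom_of_weight_eq (by omega) (by unfold weight; ring)
  have hX : IsMinZeroSum (G0 k f) X := atom_of_weight_eq (by omega) (by unfold weight; ring)
  have hY : IsMinZeroSum (G0 k f) Y := atom_of_weight_eq (by omega) (by unfold weight; ring)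
  have hUV : U + V = W + X + k • Y := by
    simp only [U, V, W, X, Y, ← ofCounts_add, nsmul_ofCounts]
    congr 1 <;> ring
  have h₂ : 2 ∈ LengthSet (G0 k f) (U + V) := ⟨{U, V}, rfl, by simp [hU, hV], by simp⟩
  have hk₂ : k + 2 ∈ LengthSet (G0 k f) (U + V) := by
    refine ⟨W ::ₘ X ::ₘ replicate k Y, by simp, ?_, by simp [hUV, sum_replicate, add_assoc]⟩
    simp only [mem_cons]
    rintro A (rfl | rfl | hA)
    exacts [hW, hX, eq_of_mem_replicate hA ▸ hY]
  refine Set.mem_biUnion (x := U + V) ⟨?_, ?_⟩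
    ⟨2, h₂, k + 2, hk₂, by omega, by omega, ?_⟩
  · exact fun g hg => (mem_add.1 hg).elim (hU.2.1.1 g) (hV.2.1.1 g)
  · rw [sum_add, hU.2.1.2, hV.2.1.2, add_zero]
  · rintro l hl ⟨hl₁, hl₂⟩
    have := Nat.le_of_dvd (by omega)
      ((Nat.modEq_iff_dvd' hl₁.le).1 (modEq_of_mem_lengthSet_s13 hf h₂ hl))
    omega

theorem minDelta_G0 (hf : addOrderOf f = 8 * k + 6) : minDelta (G0 k f) = k := by
  rcases Nat.eq_zero_or_pos k with rfl | hk
  · have hempty : DeltaB (G0 0 f) = ∅ := Set.eq_empty_of_forall_notMem fun d hd => by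
      obtain ⟨hpos, hdvd⟩ := pos_and_dvd_of_mem_deltaB hf hd
      exact hpos.ne' (Nat.eq_zero_of_zero_dvd hdvd)
    rw [minDelta, hempty, Nat.sInf_empty]
  · refine le_antisymm (Nat.sInf_le (self_mem_deltaB hf hk)) ?_
    refine le_csInf ⟨k, self_mem_deltaB hf hk⟩ fun d hd => ?_
    obtain ⟨hpos, hdvd⟩ := pos_and_dvd_of_mem_deltaB hf hd
    exact Nat.le_of_dvd hpos hdvd

end Distances

theorem stmt_13_general {G : Type*} [AddCommGroup G] (n : ℕ) (hn8 : n % 8 = 6)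
    (f : G) (hf : addOrderOf f = n) :
    minDelta ({f, 2 • f, (n / 2) • f, -(4 • f)} : Set G) = (n - 6) / 8 := by
  obtain ⟨k, rfl⟩ : ∃ k, n = 8 * k + 6 := ⟨n / 8, by omega⟩
  have hneg : -(4 • f) = (8 * k + 2) • f := by
    rw [neg_eq_iff_add_eq_zero, ← add_nsmul, ← addOrderOf_dvd_iff_nsmul_eq_zero, hf]
    exact ⟨1, by ring⟩
  rw [show (8 * k + 6) / 2 = 4 * k + 3 by omega, hneg, show (8 * k + 6 - 6) / 8 = k by omega]
  exact minDelta_G0 hf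

/-- If `n ≡ 6 (mod 8)` and `f` generates a cyclic group of
order `n`, then `min Δ(B({f, 2f, (n/2)f, -4f})) = (n-6)/8`. -/
theorem stmt_13 {G : Type*} [AddCommGroup G] [Fintype G] (n : ℕ)
    (hcard : Fintype.card G = n) (hn8 : n % 8 = 6)
    (f : G) (hf : addOrderOf f = n) :
    minDelta ({f, 2 • f, (n / 2) • f, -(4 • f)} : Set G) = (n - 6) / 8 :=
  stmt_13_general n hn8 f hf
end

section
/- Let G be a finite cyclic group of order n and let e be a generating element. For a triple of positive integers (c1, c2, d) with c1, c2 ∈ [1,n], d | n, such that (n - c1 - c2)/(c1 c2) and ((n - c1 - c2)·d)/(c2·n) are positive integers, the element g = ((n - c1)/c2)·e is a generating element of G, and d·e = d·g. -/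
open Multiset

/-- For a triple `(c1, c2, d)` with `c1, c2 ∈ [1,n]`, `d ∣ n`,
such that `(n-c1-c2)/(c1·c2)` and `(n-c1-c2)·d/(c2·n)` are positive integers,
the element `g = ((n-c1)/c2)•e` is a generating element and `d•e = d•g`. -/
theorem stmt_17 {G : Type*} [AddCommGroup G] [Fintype G] (n : ℕ)
    (hcard : Fintype.card G = n) (e : G) (he : addOrderOf e = n)
    (c1 c2 d : ℕ) (hc1 : 1 ≤ c1) (hc1n : c1 ≤ n) (hc2 : 1 ≤ c2) (hc2n : c2 ≤ n)
    (hdn : d ∣ n) (hd : 0 < d) (hcn : c1 + c2 < n)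
    (h1 : c1 * c2 ∣ n - c1 - c2) (h2 : c2 * n ∣ (n - c1 - c2) * d) :
    addOrderOf (((n - c1) / c2) • e) = n ∧
      d • e = d • (((n - c1) / c2) • e) := by
  have hc2pos : 0 < c2 := hc2
  have hdvd2 : c2 ∣ n - c1 - c2 := (dvd_mul_left c2 c1).trans h1
  have hdvd : c2 ∣ n - c1 := by
    obtain ⟨k, hk⟩ := hdvd2
    exact ⟨k + 1, by rw [Nat.mul_succ, ← hk]; omega⟩
  set m := (n - c1) / c2 with hmdef
  have hm' : c2 * m = n - c1 := by
    rw [hmdef]; exact Nat.mul_div_cancel' hdvd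
  have hm1 : 1 ≤ m := by
    rcases Nat.eq_zero_or_pos m with h | h
    · rw [h, mul_zero] at hm'; omega
    · exact h
  have hsub : n - c1 - c2 = c2 * (m - 1) := by
    rw [Nat.mul_sub_one]; omega
  have hc1m : c1 ∣ m - 1 := by
    have : c1 * c2 ∣ c2 * (m - 1) := hsub ▸ h1
    rw [mul_comm c1 c2] at this
    exact (Nat.mul_dvd_mul_iff_left hc2pos).mp this
  have hcop : (Nat.gcd n m) = 1 := by
    have hg := Nat.gcd_dvd_left n m
    have hgm := Nat.gcd_dvd_right n m
    have hgc1 : Nat.gcd n m ∣ c1 := by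
      have h1' : Nat.gcd n m ∣ c2 * m := Dvd.dvd.mul_left hgm c2
      have : c1 = n - c2 * m := by omega
      rw [this]; exact Nat.dvd_sub hg h1'
    have : Nat.gcd n m ∣ m - 1 := hgc1.trans hc1m
    have : Nat.gcd n m ∣ 1 := by
      have h2' : Nat.gcd n m ∣ m - (m - 1) := Nat.dvd_sub hgm this
      rwa [Nat.sub_sub_self hm1] at h2'
    exact Nat.dvd_one.mp this
  have hcop' : (addOrderOf e).Coprime m := by
    rw [he]; exact hcop
  constructor
  · rw [hcop'.addOrderOf_nsmul, he]
  · have hndvd : n ∣ (m - 1) * d := by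
      have : c2 * n ∣ c2 * ((m - 1) * d) := by
        rw [← mul_assoc, ← hsub]; exact h2
      exact (Nat.mul_dvd_mul_iff_left hc2pos).mp this
    have hz : ((m - 1) * d) • e = 0 := by
      exact addOrderOf_dvd_iff_nsmul_eq_zero.mp (he ▸ hndvd)
    have : d • (m • e) = d • e + ((m - 1) * d) • e := by
      rw [← mul_nsmul', ← add_nsmul]
      congr 1
      rw [Nat.sub_one_mul, mul_comm d m]
      have := Nat.le_mul_of_pos_left d hm1
      omega
    rw [this, hz, add_zero]
end
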